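/- arXiv:2506.06763 — 5 statements merged into one kernel-verified Lean document; each statement's English description precedes it below -/
import Mathlib

section
/- Suppose f is strictly regular. Then for every K ∈ ℕ with K ≥ 1 and every price schedule p, TR(p) ≤ max_{t∈[0,1]} t·(1 − F(t)); moreover this maximum is attained, and for any maximizer t* the posted-price schedule p_{t*}(i) = t*·i/K achieves TR(p_{t*}) = t*·(1 − F(t*)). Hence a posted-price schedule is an optimal price schedule. -/
/-!
Let `c m` be the lowest type that buys at least `m` of the `K` pieces. Comparing the lowest
buyer of `i` pieces with the closest lower quantity that is bought, incentive compatibility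
bounds the price of `i` pieces by `∑_{m ≤ i} c m / K`. Exchanging sums, the revenue is then at
most `∑_m (c m / K) · P(type ≥ c m) ≤ max_t t (1 - F t)`. The posted price `t*` sells all `K`
pieces exactly to the types above `t*`, which attains this bound.
-/

open MeasureTheory Set

noncomputable section

namespace Stmt0

/-- The demand set of quantity `i` under price schedule `p`, when the good is divided
into `K` equal pieces: the set of types in `[0,1]` that weakly prefer quantity `i`. -/
def demandSet (K : ℕ) (p : ℕ → ℝ) (i : ℕ) : Set ℝ :=
  {x ∈ Icc (0 : ℝ) 1 | ∀ j ≤ K, x * j / K - p j ≤ x * i / K - p i}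

/-- The demand for quantity `i`: the mass of buyers weakly preferring `i`. -/
def demand (f : ℝ → ℝ) (K : ℕ) (p : ℕ → ℝ) (i : ℕ) : ℝ :=
  ∫ x in demandSet K p i, f x

/-- Total revenue of the price schedule `p`. -/
def TR (f : ℝ → ℝ) (K : ℕ) (p : ℕ → ℝ) : ℝ :=
  ∑ i ∈ Finset.Icc 1 K, p i * demand f K p i

/-- The posted-price schedule with price `t`: quantity `i` costs `t·i/K`. -/
def posted (K : ℕ) (t : ℝ) : ℕ → ℝ := fun i => t * i / K

/-- The c.d.f. of the type distribution. -/
def cdf (f : ℝ → ℝ) (x : ℝ) : ℝ := ∫ s in Icc (0 : ℝ) x, f s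

lemma integrableOn_of_integral_eq_one {f : ℝ → ℝ} {s : Set ℝ} (h : ∫ x in s, f x = 1) :
    IntegrableOn f s :=
  Integrable.of_integral_ne_zero (by rw [h]; exact one_ne_zero)

lemma integral_Icc_eq_one_sub_cdf {f : ℝ → ℝ} (hfi : IntegrableOn f (Icc 0 1))
    (hf_prob : ∫ x in Icc (0 : ℝ) 1, f x = 1) {a : ℝ} (ha : a ∈ Icc (0 : ℝ) 1) :
    ∫ x in Icc a 1, f x = 1 - cdf f a := by
  have hdisj : Disjoint (Icc 0 a) (Ioc a 1) :=
    Set.disjoint_left.mpr fun _ hx hx' => (not_le.mpr hx'.1) hx.2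
  have hunion : Icc 0 a ∪ Ioc a 1 = Icc (0 : ℝ) 1 := Icc_union_Ioc_eq_Icc ha.1 ha.2
  have hsplit := setIntegral_union hdisj measurableSet_Ioc
    (hfi.mono_set (hunion ▸ subset_union_left)) (hfi.mono_set (hunion ▸ subset_union_right))
  rw [hunion, hf_prob, setIntegral_congr_set Ioc_ae_eq_Icc] at hsplit
  rw [cdf]
  linarith

lemma continuousOn_cdf {f : ℝ → ℝ} (hfi : IntegrableOn f (Icc 0 1)) :
    ContinuousOn (cdf f) (Icc 0 1) := by
  have hprim := intervalIntegral.continuousOn_primitive_interval (a := 0) (b := 1)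
    (μ := volume) (by rwa [uIcc_of_le zero_le_one])
  rw [uIcc_of_le zero_le_one] at hprim
  refine hprim.congr fun x hx => ?_
  change cdf f x = ∫ s in (0 : ℝ)..x, f s
  rw [cdf, intervalIntegral.integral_of_le hx.1, setIntegral_congr_set Ioc_ae_eq_Icc]

section Demand

variable {K : ℕ} {p : ℕ → ℝ}

lemma isClosed_demandSet (K : ℕ) (p : ℕ → ℝ) (i : ℕ) : IsClosed (demandSet K p i) := by
  have h : demandSet K p i =
      Icc 0 1 ∩ ⋂ j ∈ Iic K, {x : ℝ | x * j / K - p j ≤ x * i / K - p i} := by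
    ext x
    simp [demandSet, mem_iInter]
  rw [h]
  exact isClosed_Icc.inter (isClosed_biInter fun j _ => isClosed_le (by fun_prop) (by fun_prop))

lemma le_of_mem_demandSet_of_lt (hK : 0 < K) {i j : ℕ} (hij : i < j) (hjK : j ≤ K) {x y : ℝ}
    (hx : x ∈ demandSet K p i) (hy : y ∈ demandSet K p j) : x ≤ y := by
  have hx' := hx.2 j hjK
  have hy' := hy.2 i (hij.le.trans hjK)
  have hsum : (y - x) * (((j : ℝ) - i) / K) =
      (y * j / K - p j) - (y * i / K - p i) + ((x * i / K - p i) - (x * j / K - p j)) := by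
    ring
  by_contra! hxy
  have : (y - x) * (((j : ℝ) - i) / K) < 0 :=
    mul_neg_of_neg_of_pos (by linarith)
      (div_pos (sub_pos.mpr (by exact_mod_cast hij)) (by exact_mod_cast hK))
  linarith

lemma aedisjoint_demandSet (hK : 0 < K) {i j : ℕ} (hij : i ≠ j) (hiK : i ≤ K) (hjK : j ≤ K) :
    AEDisjoint volume (demandSet K p i) (demandSet K p j) := by
  wlog hlt : i < j generalizing i j
  · exact (this hij.symm hjK hiK (by omega)).symm
  refine Set.Subsingleton.measure_zero (fun x hx y hy => le_antisymm ?_ ?_) volume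
  · exact le_of_mem_demandSet_of_lt hK hlt hjK hx.1 hy.2
  · exact le_of_mem_demandSet_of_lt hK hlt hjK hy.1 hx.2

/-- The lowest type buying at least `m` pieces, or `1` if nobody does. -/
def cutoff (K : ℕ) (p : ℕ → ℝ) (m : ℕ) : ℝ :=
  sInf (insert 1 (⋃ l ∈ Finset.Icc m K, demandSet K p l))

lemma cutoff_set_subset_Icc (m : ℕ) :
    insert 1 (⋃ l ∈ Finset.Icc m K, demandSet K p l) ⊆ Icc 0 1 :=
  insert_subset (right_mem_Icc.mpr zero_le_one) (iUnion₂_subset fun _ _ _ hx => hx.1)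

lemma cutoff_mem_Icc (m : ℕ) : cutoff K p m ∈ Icc 0 1 :=
  ⟨le_csInf (insert_nonempty _ _) fun _ hx => (cutoff_set_subset_Icc m hx).1,
    csInf_le ⟨0, fun _ hx => (cutoff_set_subset_Icc m hx).1⟩ (mem_insert _ _)⟩

lemma cutoff_le {m l : ℕ} (hml : m ≤ l) (hlK : l ≤ K) {x : ℝ} (hx : x ∈ demandSet K p l) :
    cutoff K p m ≤ x :=
  csInf_le ⟨0, fun _ hy => (cutoff_set_subset_Icc m hy).1⟩
    (mem_insert_of_mem _ (mem_biUnion (Finset.mem_Icc.mpr ⟨hml, hlK⟩) hx))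

lemma le_cutoff {m : ℕ} {a : ℝ} (ha : a ≤ 1)
    (h : ∀ l, m ≤ l → l ≤ K → ∀ x ∈ demandSet K p l, a ≤ x) : a ≤ cutoff K p m := by
  refine le_csInf (insert_nonempty _ _) ?_
  rintro x (rfl | hx)
  · exact ha
  · obtain ⟨l, hl, hxl⟩ := mem_iUnion₂.mp hx
    rw [Finset.mem_Icc] at hl
    exact h l hl.1 hl.2 x hxl

/-- The lowest buyer `a` of `i` pieces weakly prefers `i` to `j`, so `p i - p j ≤ a (i - j) / K`;
as nobody buys strictly between `j` and `i`, every cutoff in `(j, i]` is at least `a`. -/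
lemma price_sub_le_sum_cutoff (hK : 0 < K) {i j : ℕ} (hji : j ≤ i) (hiK : i ≤ K)
    (hne : (demandSet K p i).Nonempty) (hgap : ∀ l, j < l → l < i → demandSet K p l = ∅) :
    p i - p j ≤ ∑ m ∈ Finset.Ioc j i, cutoff K p m / K := by
  set a := sInf (demandSet K p i)
  have hbdd : BddBelow (demandSet K p i) := ⟨0, fun _ hx => hx.1.1⟩
  have ha : a ∈ demandSet K p i := (isClosed_demandSet K p i).csInf_mem hne hbdd
  have ha_le : ∀ m ∈ Finset.Ioc j i, a / K ≤ cutoff K p m / K := by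
    intro m hm
    rw [Finset.mem_Ioc] at hm
    gcongr
    refine le_cutoff ha.1.2 fun l hml hlK x hx => ?_
    rcases lt_trichotomy l i with hli | rfl | hil
    · simp [hgap l (by omega) hli] at hx
    · exact csInf_le hbdd hx
    · exact le_of_mem_demandSet_of_lt hK hil hlK ha hx
  calc p i - p j ≤ a * i / K - a * j / K := by linarith [ha.2 j (hji.trans hiK)]
    _ = ∑ _m ∈ Finset.Ioc j i, a / K := by
      rw [Finset.sum_const, Nat.card_Ioc, nsmul_eq_mul, Nat.cast_sub hji]
      ring
    _ ≤ ∑ m ∈ Finset.Ioc j i, cutoff K p m / K := Finset.sum_le_sum ha_le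

lemma price_le_sum_cutoff (hK : 0 < K) (hp0 : p 0 = 0) {i : ℕ} (hiK : i ≤ K)
    (hne : (demandSet K p i).Nonempty) :
    p i ≤ ∑ m ∈ Finset.Ioc 0 i, cutoff K p m / K := by
  induction i using Nat.strong_induction_on with
  | _ i ih =>
  classical
  rcases Nat.eq_zero_or_pos i with rfl | hi
  · simp [hp0]
  -- `j` is the largest quantity below `i` that is bought, or `0` if there is none.
  set P : ℕ → Prop := fun l => l = 0 ∨ (demandSet K p l).Nonempty
  set j := Nat.findGreatest P (i - 1)
  have hji : j < i := (Nat.findGreatest_le (i - 1)).trans_lt (by omega)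
  have hj : P j := Nat.findGreatest_spec (Nat.zero_le _) (Or.inl rfl)
  have hpj : p j ≤ ∑ m ∈ Finset.Ioc 0 j, cutoff K p m / K :=
    hj.elim
      (fun h => by rw [h, hp0, Finset.Ioc_self, Finset.sum_empty]) (ih j hji (by omega))
  have hgap : ∀ l, j < l → l < i → demandSet K p l = ∅ := fun l hjl hli =>
    not_nonempty_iff_eq_empty.mp fun hl => Nat.findGreatest_is_greatest hjl (by omega) (Or.inr hl)
  have hstep := price_sub_le_sum_cutoff hK hji.le hiK hne hgap
  rw [← Finset.sum_Ioc_consecutive _ (Nat.zero_le j) hji.le]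
  linarith

lemma sum_demand_le_integral_cutoff {f : ℝ → ℝ} (hf : ∀ x, 0 ≤ f x)
    (hfi : IntegrableOn f (Icc 0 1)) (hK : 0 < K) (m : ℕ) :
    ∑ i ∈ Finset.Icc m K, demand f K p i ≤ ∫ x in Icc (cutoff K p m) 1, f x := by
  have hsub : (⋃ i : Finset.Icc m K, demandSet K p i) ⊆ Icc (cutoff K p m) 1 := by
    rintro x hx
    obtain ⟨⟨i, hi⟩, hxi⟩ := mem_iUnion.mp hx
    rw [Finset.mem_Icc] at hi
    exact ⟨cutoff_le hi.1 hi.2 hxi, hxi.1.2⟩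
  have hIcc : Icc (cutoff K p m) 1 ⊆ Icc 0 1 := Icc_subset_Icc_left (cutoff_mem_Icc m).1
  have hunion := integral_iUnion_ae (μ := volume) (f := f)
    (fun i : Finset.Icc m K => (isClosed_demandSet K p i).measurableSet.nullMeasurableSet)
    (fun i i' hii' => aedisjoint_demandSet hK (Subtype.coe_ne_coe.mpr hii')
      (Finset.mem_Icc.mp i.2).2 (Finset.mem_Icc.mp i'.2).2)
    (hfi.mono_set (hsub.trans hIcc))
  rw [Finset.tsum_subtype (Finset.Icc m K) (fun i => ∫ x in demandSet K p i, f x)] at hunion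
  change ∑ i ∈ Finset.Icc m K, ∫ x in demandSet K p i, f x ≤ _
  rw [← hunion]
  exact setIntegral_mono_set (hfi.mono_set hIcc) (Filter.Eventually.of_forall fun x => hf x)
    (Filter.Eventually.of_forall hsub)

lemma TR_le_sum_cutoff {f : ℝ → ℝ} (hf : ∀ x, 0 ≤ f x) (hfi : IntegrableOn f (Icc 0 1))
    (hK : 0 < K) (hp0 : p 0 = 0) :
    TR f K p ≤ ∑ m ∈ Finset.Icc 1 K, cutoff K p m / K * ∫ x in Icc (cutoff K p m) 1, f x := by
  have hdemand : ∀ i, 0 ≤ demand f K p i := fun i =>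
    setIntegral_nonneg (isClosed_demandSet K p i).measurableSet fun x _ => hf x
  calc TR f K p
      ≤ ∑ i ∈ Finset.Icc 1 K, (∑ m ∈ Finset.Ioc 0 i, cutoff K p m / K) * demand f K p i := by
        refine Finset.sum_le_sum fun i hi => ?_
        rcases (demandSet K p i).eq_empty_or_nonempty with hempty | hne
        · simp [demand, hempty]
        · exact mul_le_mul_of_nonneg_right
            (price_le_sum_cutoff hK hp0 (Finset.mem_Icc.mp hi).2 hne) (hdemand i)
    _ = ∑ m ∈ Finset.Icc 1 K, cutoff K p m / K * ∑ i ∈ Finset.Icc m K, demand f K p i := by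
        simp only [Finset.sum_mul, Finset.mul_sum]
        refine Finset.sum_comm' fun i m => ?_
        simp only [Finset.mem_Icc, Finset.mem_Ioc]
        omega
    _ ≤ _ := Finset.sum_le_sum fun m _ => mul_le_mul_of_nonneg_left
        (sum_demand_le_integral_cutoff hf hfi hK m)
        (div_nonneg (cutoff_mem_Icc m).1 (Nat.cast_nonneg K))

end Demand

section Posted

variable {K : ℕ} {t : ℝ}

lemma mem_demandSet_posted (hK : 0 < K) {x : ℝ} {i : ℕ} :
    x ∈ demandSet K (posted K t) i ↔ x ∈ Icc 0 1 ∧ ∀ j ≤ K, (x - t) * j ≤ (x - t) * i := by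
  have hK' : (0 : ℝ) < K := by exact_mod_cast hK
  simp only [demandSet, posted, mem_ofPred_eq, ← sub_div, ← sub_mul,
    div_le_div_iff_of_pos_right hK']

lemma demandSet_posted_self (hK : 0 < K) (ht : t ∈ Icc 0 1) :
    demandSet K (posted K t) K = Icc t 1 := by
  have hK' : (0 : ℝ) < K := by exact_mod_cast hK
  ext x
  rw [mem_demandSet_posted hK]
  constructor
  · rintro ⟨hx, h⟩
    have h0 := h 0 (Nat.zero_le K)
    simp only [Nat.cast_zero, mul_zero] at h0
    exact ⟨by nlinarith, hx.2⟩
  · rintro ⟨htx, hx1⟩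
    refine ⟨⟨ht.1.trans htx, hx1⟩, fun j hj => ?_⟩
    exact mul_le_mul_of_nonneg_left (by exact_mod_cast hj) (sub_nonneg.mpr htx)

lemma demandSet_posted_subset_singleton {i : ℕ} (hi : 0 < i) (hiK : i < K) :
    demandSet K (posted K t) i ⊆ {t} := by
  intro x hx
  rw [mem_demandSet_posted (hi.trans hiK)] at hx
  have h0 := hx.2 0 (Nat.zero_le K)
  have hfull := hx.2 K le_rfl
  simp only [Nat.cast_zero, mul_zero] at h0
  have hi' : (0 : ℝ) < i := by exact_mod_cast hi
  have hiK' : (i : ℝ) < K := by exact_mod_cast hiK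
  have : x - t = 0 := by nlinarith
  exact mem_singleton_iff.mpr (by linarith)

lemma TR_posted {f : ℝ → ℝ} (hfi : IntegrableOn f (Icc 0 1))
    (hf_prob : ∫ x in Icc (0 : ℝ) 1, f x = 1) (hK : 0 < K) (ht : t ∈ Icc 0 1) :
    TR f K (posted K t) = t * (1 - cdf f t) := by
  have hK' : (K : ℝ) ≠ 0 := by exact_mod_cast hK.ne'
  rw [TR, Finset.sum_eq_single_of_mem K (Finset.mem_Icc.mpr ⟨hK, le_rfl⟩)]
  · rw [demand, demandSet_posted_self hK ht, integral_Icc_eq_one_sub_cdf hfi hf_prob ht, posted,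
      mul_div_assoc, div_self hK', mul_one]
  · intro i hi hiK
    have hi := Finset.mem_Icc.mp hi
    have hnull : volume (demandSet K (posted K t) i) = 0 :=
      measure_mono_null (demandSet_posted_subset_singleton hi.1 (lt_of_le_of_ne hi.2 hiK))
        (measure_singleton t)
    rw [demand, Measure.restrict_eq_zero.mpr hnull, integral_zero_measure, mul_zero]

end Posted

lemma TR_le_of_isMaxOn {f : ℝ → ℝ} (hf : ∀ x, 0 ≤ f x)
    (hf_prob : ∫ x in Icc (0 : ℝ) 1, f x = 1) {K : ℕ} (hK : 0 < K) {t : ℝ}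
    (hmax : IsMaxOn (fun s => s * (1 - cdf f s)) (Icc 0 1) t) {p : ℕ → ℝ} (hp0 : p 0 = 0) :
    TR f K p ≤ t * (1 - cdf f t) := by
  have hfi := integrableOn_of_integral_eq_one hf_prob
  have hK' : (0 : ℝ) < K := by exact_mod_cast hK
  calc TR f K p
      ≤ ∑ m ∈ Finset.Icc 1 K, cutoff K p m / K * ∫ x in Icc (cutoff K p m) 1, f x :=
        TR_le_sum_cutoff hf hfi hK hp0
    _ ≤ ∑ _m ∈ Finset.Icc 1 K, t * (1 - cdf f t) / K := by
        refine Finset.sum_le_sum fun m _ => ?_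
        rw [integral_Icc_eq_one_sub_cdf hfi hf_prob (cutoff_mem_Icc m), div_mul_eq_mul_div]
        exact div_le_div_of_nonneg_right (hmax (cutoff_mem_Icc m)) hK'.le
    _ = t * (1 - cdf f t) := by
        rw [Finset.sum_const, Nat.card_Icc, Nat.add_sub_cancel, nsmul_eq_mul]
        field_simp

theorem posted_price_optimal_general
    (f : ℝ → ℝ)
    (hf_nonneg : ∀ x, 0 ≤ f x)
    (hf_prob : ∫ x in Icc (0 : ℝ) 1, f x = 1) :
    (∃ t ∈ Icc (0 : ℝ) 1, IsMaxOn (fun s => s * (1 - cdf f s)) (Icc (0 : ℝ) 1) t) ∧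
    ∀ K : ℕ, 1 ≤ K → ∀ t ∈ Icc (0 : ℝ) 1,
      IsMaxOn (fun s => s * (1 - cdf f s)) (Icc (0 : ℝ) 1) t →
        (∀ p : ℕ → ℝ, p 0 = 0 → TR f K p ≤ t * (1 - cdf f t)) ∧
        TR f K (posted K t) = t * (1 - cdf f t) := by
  have hfi := integrableOn_of_integral_eq_one hf_prob
  have hcont : ContinuousOn (fun s => s * (1 - cdf f s)) (Icc 0 1) :=
    continuousOn_id.mul (continuousOn_const.sub (continuousOn_cdf hfi))
  refine ⟨isCompact_Icc.exists_isMaxOn (nonempty_Icc.mpr zero_le_one) hcont, ?_⟩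
  intro K hK t ht hmax
  exact ⟨fun p hp0 => TR_le_of_isMaxOn hf_nonneg hf_prob hK hmax hp0,
    TR_posted hfi hf_prob hK ht⟩

/-- if `f` is strictly regular, then for every `K ≥ 1` and every price
schedule `p`, `TR(p) ≤ max_{t ∈ [0,1]} t·(1 − F(t))`; the maximum is attained, and for
any maximizer `t*` the posted-price schedule `p_{t*}(i) = t*·i/K` achieves
`TR(p_{t*}) = t*·(1 − F(t*))`.  Hence a posted-price schedule is optimal. -/
theorem posted_price_optimal
    (f : ℝ → ℝ)
    (hf_nonneg : ∀ x, 0 ≤ f x)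
    (hf_prob : ∫ x in Icc (0 : ℝ) 1, f x = 1)
    (hf_smooth : ContDiffOn ℝ 1 f (Ioo (0 : ℝ) 1))
    (hf_one : 0 < f 1)
    (hreg : ∀ᵐ x ∂(volume.restrict (Icc (0 : ℝ) 1)), 0 < x * deriv f x + 2 * f x) :
    (∃ t ∈ Icc (0 : ℝ) 1, IsMaxOn (fun s => s * (1 - cdf f s)) (Icc (0 : ℝ) 1) t) ∧
    ∀ K : ℕ, 1 ≤ K → ∀ t ∈ Icc (0 : ℝ) 1,
      IsMaxOn (fun s => s * (1 - cdf f s)) (Icc (0 : ℝ) 1) t →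
        (∀ p : ℕ → ℝ, p 0 = 0 → TR f K p ≤ t * (1 - cdf f t)) ∧
        TR f K (posted K t) = t * (1 - cdf f t) :=
  posted_price_optimal_general f hf_nonneg hf_prob

end Stmt0
end
end

section
/- Suppose X = [0,1]^N (so the bottom boundary of X is negligible for μ). Then for any optimal feasible price schedule p and every q ∈ 𝒬 with q ≠ 0, the demand set D(q) satisfies μ(D(q)) = 0. -/
open MeasureTheory Set

noncomputable section

namespace Stmt9

variable {N : ℕ}

/-- Dot product on `ℝ^N`. -/
def dot (x q : Fin N → ℝ) : ℝ := ∑ n, x n * q n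

/-- The box `[a,b]^N`. -/
def box (a b : ℝ) : Set (Fin N → ℝ) := Icc (fun _ => a) (fun _ => b)

/-- `φ(x) = x·∇f(x) + (N+1)·f(x)`. -/
def phi (f : (Fin N → ℝ) → ℝ) (x : Fin N → ℝ) : ℝ :=
  (∑ n, x n * fderiv ℝ f x (Pi.single n 1)) + (N + 1) * f x

/-- The boundary integral `∫_{[x̲,x̄]^{N−1}} 1_A(ι_n^c(y)) f(ι_n^c(y)) dy`, written as an
integral over the full box divided by the length of the redundant coordinate. -/
def bInt (xl xu : ℝ) (f : (Fin N → ℝ) → ℝ) (n : Fin N) (c : ℝ) (A : Set (Fin N → ℝ)) : ℝ :=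
  (xu - xl)⁻¹ *
    ∫ y in box xl xu, A.indicator f (Function.update y n c)

/-- The transformed measure `μ` of the type distribution, as a set function:
`μ(A) = Σₙ (x̄·∫ 1_A(ι_n^{x̄}) f − x̲·∫ 1_A(ι_n^{x̲}) f) − ∫_{A} φ`. -/
def mu (xl xu : ℝ) (f : (Fin N → ℝ) → ℝ) (A : Set (Fin N → ℝ)) : ℝ :=
  (∑ n, (xu * bInt xl xu f n xu A - xl * bInt xl xu f n xl A)) -
    ∫ x in A ∩ box xl xu, phi f x

/-- The indirect utility `u_p(x) = sup_{q ∈ Q} (x·q − p(q))`. -/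
def indirect (Q : Set (Fin N → ℝ)) (p : (Fin N → ℝ) → ℝ) (x : Fin N → ℝ) : ℝ :=
  sSup ((fun q => dot x q - p q) '' Q)

/-- The lower convex envelope `p̄(q) = sup_{x ∈ X} (x·q − u_p(x))`. -/
def envelope (X Q : Set (Fin N → ℝ)) (p : (Fin N → ℝ) → ℝ) (q : Fin N → ℝ) : ℝ :=
  sSup ((fun x => dot x q - indirect Q p x) '' X)

/-- The demand set of a bundle `q`. -/
def demandSet (X Q : Set (Fin N → ℝ)) (p : (Fin N → ℝ) → ℝ) (q : Fin N → ℝ) :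
    Set (Fin N → ℝ) :=
  {x ∈ X | ∀ q' ∈ Q, dot x q' - envelope X Q p q' ≤ dot x q - envelope X Q p q}

/-- A feasible price schedule: bounded below, with the zero bundle priced at zero. -/
def Feasible (Q : Set (Fin N → ℝ)) (p : (Fin N → ℝ) → ℝ) : Prop :=
  BddBelow (p '' Q) ∧ p 0 = 0

/-- The seller's revenue `∫_X u_p dμ`. -/
def TR (xl xu : ℝ) (f : (Fin N → ℝ) → ℝ) (Q : Set (Fin N → ℝ))
    (p : (Fin N → ℝ) → ℝ) : ℝ :=
  (∑ n, (xu - xl)⁻¹ *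
    (xu * ∫ y in box xl xu,
            indirect Q p (Function.update y n xu) * f (Function.update y n xu)
     - xl * ∫ y in box xl xu,
            indirect Q p (Function.update y n xl) * f (Function.update y n xl)))
  - ∫ x in box xl xu, indirect Q p x * phi f x

/-- A price schedule is optimal if it is feasible and maximizes `∫_X u_p dμ` among
feasible price schedules. -/
def Optimal (xl xu : ℝ) (f : (Fin N → ℝ) → ℝ) (Q : Set (Fin N → ℝ))
    (p : (Fin N → ℝ) → ℝ) : Prop :=
  Feasible Q p ∧ ∀ p', Feasible Q p' → TR xl xu f Q p' ≤ TR xl xu f Q p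

/-- The maintained assumptions on the type density `f` on `X = [x̲,x̄]^N`. -/
def DensityHyp (xl xu : ℝ) (f : (Fin N → ℝ) → ℝ) : Prop :=
  (∀ x, 0 ≤ f x) ∧ (∫ x in box xl xu, f x = 1) ∧
  ContinuousOn f (box xl xu) ∧ ContDiffOn ℝ 1 f (interior (box xl xu)) ∧
  (∀ x ∈ frontier (box xl xu), 0 < f x) ∧
  (∃ M : ℝ, ∀ x ∈ interior (box xl xu), |phi f x| ≤ M)

/-- The maintained assumptions on the allocation space `𝒬`. -/
def QHyp (Q : Set (Fin N → ℝ)) : Prop :=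
  Convex ℝ Q ∧ IsCompact Q ∧ (∀ q ∈ Q, ∀ n, 0 ≤ q n) ∧
  (interior Q).Nonempty ∧ (0 : Fin N → ℝ) ∈ Q

/-- The measure with density `f` (the buyers' type distribution). -/
def muF (f : (Fin N → ℝ) → ℝ) : Measure (Fin N → ℝ) :=
  volume.withDensity fun x => ENNReal.ofReal (f x)

end Stmt9

/-!
Write `u` for the indirect utility of `p` (so the revenue is `∫ u dμ`) and
`ℓ_z(x) = x·z - p̄(z)` for the surplus at convexified prices, so that `u = max_z ℓ_z` on `X` and
`D(q)` is where `ℓ_q` attains the maximum. Optimality gives `∫ lim (u_t - u)/t dμ ≤ 0` along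
every family `p_t` of feasible schedules, the limit being taken by dominated convergence.

* Undercutting the price of `q` to `p̄(q) - t` gives `u_t = max(u, ℓ_q + t)`, so
  `(u_t - u)/t → 1_{D(q)}` and `μ(D(q)) ≤ 0`.
* Raising all prices to `p̄ + t·c`, with `c` continuous and `c(0) = 0` (the bundle `0` can stay
  free because convexity of `Q` makes it a limit of nonzero bundles), Danskin's theorem gives
  `(u - u_t)/t → min c` over the bundles demanded at `x`, so `∫ min c dμ ≥ 0`. Steeper and
  steeper tents `c` at `q` give `μ(E) ≥ 0`, `E` being the set of types demanding only `q`.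
  Since `u` is Lipschitz, Rademacher's theorem makes demand single-valued a.e., so `E` and `D(q)`
  differ only on the upper faces, where `μ` is positive and `E ⊆ D(q)`. Hence `μ(D(q)) ≥ 0`.
-/

open Filter Topology Function

section Danskin

variable {E : Type*} {K : Set E} {F G c : E → ℝ}

lemma abs_sSup_image_sub_sSup_image_le (hK : K.Nonempty) (hF : BddAbove (F '' K))
    (hG : BddAbove (G '' K)) {C : ℝ} (h : ∀ z ∈ K, |F z - G z| ≤ C) :
    |sSup (F '' K) - sSup (G '' K)| ≤ C := by
  rw [abs_sub_le_iff, sub_le_iff_le_add, sub_le_iff_le_add]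
  constructor <;> refine csSup_le (hK.image _) (forall_mem_image.2 fun z hz => ?_)
  · linarith [(abs_sub_le_iff.1 (h z hz)).1, le_csSup hG (mem_image_of_mem G hz)]
  · linarith [(abs_sub_le_iff.1 (h z hz)).2, le_csSup hF (mem_image_of_mem F hz)]

variable [TopologicalSpace E]

/-- Away from the maximizers of `F`, `F` stays uniformly below its maximum. -/
lemma IsCompact.eventually_sSup_image_sub_mul_le (hK : IsCompact K) (hne : K.Nonempty)
    (hF : Continuous F) (hc : Continuous c) {a : ℝ} (ha : ∀ z ∈ K, IsMaxOn F K z → a < c z) :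
    ∀ᶠ t in 𝓝[>] 0, sSup ((fun z => F z - t * c z) '' K) ≤ sSup (F '' K) - t * a := by
  set M := sSup (F '' K)
  have hFM : ∀ z ∈ K, F z ≤ M := fun z hz =>
    le_csSup (hK.image hF).bddAbove (mem_image_of_mem F hz)
  set K' := {z ∈ K | c z ≤ a}
  have hK' : IsCompact K' := hK.inter_right (isClosed_le hc continuous_const)
  have hgap : ∀ z ∈ K', 0 < M - F z := fun z hz => by
    refine sub_pos.2 (lt_of_le_of_ne (hFM z hz.1) fun hzM => ?_)
    exact (ha z hz.1 fun w hw => hzM ▸ hFM w hw).not_ge hz.2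
  obtain ⟨η, hη, hηle⟩ := hK'.exists_forall_le' (by fun_prop) hgap
  obtain ⟨B, hB⟩ := hK.exists_bound_of_continuousOn hc.continuousOn
  have hsmall : ∀ᶠ t in 𝓝[>] (0 : ℝ), t * (B + a) < η := by
    have : Tendsto (fun t : ℝ => t * (B + a)) (𝓝 0) (𝓝 0) := by
      simpa using (continuous_id.mul continuous_const).tendsto (0 : ℝ) (f := fun t => t * (B + a))
    exact nhdsWithin_le_nhds (this.eventually (gt_mem_nhds hη))
  filter_upwards [self_mem_nhdsWithin, hsmall] with t (ht : 0 < t) htη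
  refine csSup_le (hne.image _) (forall_mem_image.2 fun z hz => ?_)
  by_cases hza : c z ≤ a
  · have hcB : -B ≤ c z := neg_le_of_abs_le (hB z hz)
    nlinarith [hηle z ⟨hz, hza⟩]
  · nlinarith [hFM z hz]

/-- **Danskin's theorem**, for the right derivative at `0`. -/
theorem IsCompact.tendsto_slope_sSup_image_sub_mul (hK : IsCompact K) (hne : K.Nonempty)
    (hF : Continuous F) (hc : Continuous c) :
    Tendsto (fun t => t⁻¹ * (sSup ((fun z => F z - t * c z) '' K) - sSup (F '' K))) (𝓝[>] 0)
      (𝓝 (-sInf (c '' {z ∈ K | IsMaxOn F K z}))) := by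
  set A := {z ∈ K | IsMaxOn F K z}
  have hA : IsCompact A := by
    have : A = K ∩ ⋂ w ∈ K, {z | F w ≤ F z} := by ext z; simp [A, isMaxOn_iff]
    exact this ▸ hK.inter_right (isClosed_biInter fun w _ => isClosed_le continuous_const hF)
  obtain ⟨z₀, hz₀A, hz₀⟩ := hA.exists_isMinOn (hK.exists_isMaxOn hne hF.continuousOn)
    hc.continuousOn
  have hm : sInf (c '' A) = c z₀ :=
    IsLeast.csInf_eq ⟨mem_image_of_mem c hz₀A, forall_mem_image.2 (isMinOn_iff.1 hz₀)⟩
  have hM : sSup (F '' K) = F z₀ :=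
    IsGreatest.csSup_eq ⟨mem_image_of_mem F hz₀A.1, forall_mem_image.2 (isMaxOn_iff.1 hz₀A.2)⟩
  rw [hm, tendsto_order]
  constructor
  · intro b hb
    filter_upwards [self_mem_nhdsWithin] with t (ht : 0 < t)
    have : F z₀ - t * c z₀ ≤ sSup ((fun z => F z - t * c z) '' K) :=
      le_csSup (hK.image (by fun_prop)).bddAbove (mem_image_of_mem _ hz₀A.1)
    calc b < -c z₀ := hb
      _ = t⁻¹ * ((F z₀ - t * c z₀) - F z₀) := by field_simp; ring
      _ ≤ _ := by rw [hM]; gcongr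
  · intro b hb
    have ha : ∀ z ∈ K, IsMaxOn F K z → (c z₀ - b) / 2 < c z := fun z hz hmax => by
      linarith [isMinOn_iff.1 hz₀ z ⟨hz, hmax⟩]
    filter_upwards [self_mem_nhdsWithin, hK.eventually_sSup_image_sub_mul_le hne hF hc ha]
      with t (ht : 0 < t) hle
    calc t⁻¹ * (sSup ((fun z => F z - t * c z) '' K) - sSup (F '' K))
        ≤ t⁻¹ * (-(t * ((c z₀ - b) / 2))) := by gcongr; linarith
      _ = -((c z₀ - b) / 2) := by field_simp
      _ < b := by linarith

end Danskin

theorem Convex.ae_mem_interior {E : Type*} [NormedAddCommGroup E] [NormedSpace ℝ E]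
    [MeasurableSpace E] [BorelSpace E] [FiniteDimensional ℝ E] (μ : Measure E)
    [μ.IsAddHaarMeasure] {s : Set E} (hs : Convex ℝ s) : ∀ᵐ x ∂μ, x ∈ s → x ∈ interior s := by
  filter_upwards [measure_eq_zero_iff_ae_notMem.1 (hs.addHaar_frontier μ)] with x hx hxs
  by_contra h
  exact hx ⟨subset_closure hxs, h⟩

theorem Convex.mem_closure_diff_singleton {E : Type*} [AddCommGroup E] [Module ℝ E]
    [TopologicalSpace E] [IsTopologicalAddGroup E] [ContinuousSMul ℝ E] {s : Set E}
    (hs : Convex ℝ s) {x y : E} (hx : x ∈ s) (hy : y ∈ s) (hxy : y ≠ x) :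
    x ∈ closure (s \ {x}) := by
  have hlim : Tendsto (fun t : ℝ => x + t • (y - x)) (𝓝[>] 0) (𝓝 x) :=
    (Continuous.tendsto' (by fun_prop) 0 x (by simp)).mono_left nhdsWithin_le_nhds
  refine mem_closure_of_tendsto hlim ?_
  filter_upwards [Ioo_mem_nhdsGT one_pos] with t ht
  exact ⟨hs.add_smul_sub_mem hx hy ⟨ht.1.le, ht.2.le⟩,
    by simpa [ht.1.ne', sub_eq_zero] using hxy⟩

lemma bddBelow_image_update {α : Type*} [DecidableEq α] {s : Set α} {g : α → ℝ}
    (hg : BddBelow (g '' s)) (a : α) (b : ℝ) : BddBelow (update g a b '' s) := by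
  obtain ⟨c, hc⟩ := hg
  refine ⟨min b c, forall_mem_image.2 fun z hz => ?_⟩
  rcases eq_or_ne z a with rfl | h
  · simp
  · simpa [h] using (min_le_right _ _).trans (hc (mem_image_of_mem g hz))

lemma tendsto_inv_mul_max_zero_add {a : ℝ} (ha : a ≤ 0) :
    Tendsto (fun t => t⁻¹ * max 0 (a + t)) (𝓝[>] 0) (𝓝 (if a = 0 then 1 else 0)) := by
  rcases ha.eq_or_lt with rfl | ha
  · refine tendsto_const_nhds.congr' ?_
    filter_upwards [self_mem_nhdsWithin] with t (ht : 0 < t)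
    simp [max_eq_right ht.le, ht.ne']
  · rw [if_neg ha.ne]
    refine tendsto_const_nhds.congr' ?_
    filter_upwards [Ioo_mem_nhdsGT (neg_pos.2 ha)] with t ht
    simp [max_eq_left (by linarith [ht.2] : a + t ≤ 0)]

lemma abs_inv_mul_max_zero_add_le {a t : ℝ} (ha : a ≤ 0) (ht : 0 < t) :
    |t⁻¹ * max 0 (a + t)| ≤ 1 := by
  rw [abs_of_nonneg (by positivity), inv_mul_le_iff₀ ht, mul_one]
  exact max_le ht.le (by linarith)

namespace Stmt9

variable {N : ℕ}

section Dot

lemma dot_eq_dotProduct (x q : Fin N → ℝ) : dot x q = x ⬝ᵥ q := rfl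

lemma dot_zero_right (x : Fin N → ℝ) : dot x 0 = 0 := dotProduct_zero x

lemma dot_single_left (m : Fin N) (q : Fin N → ℝ) : dot (Pi.single m 1) q = q m := by
  simp [dot_eq_dotProduct, single_dotProduct]

@[fun_prop]
lemma _root_.Continuous.dot {α : Type*} [TopologicalSpace α] {x q : α → Fin N → ℝ}
    (hx : Continuous x) (hq : Continuous q) : Continuous fun a => dot (x a) (q a) := by
  unfold Stmt9.dot; fun_prop

lemma abs_dot_le (x q : Fin N → ℝ) : |dot x q| ≤ N * ‖x‖ * ‖q‖ := by
  calc |dot x q| ≤ ∑ n, |x n| * |q n| := by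
        simpa only [dot, abs_mul] using Finset.abs_sum_le_sum_abs (fun n => x n * q n) _
    _ ≤ ∑ _n : Fin N, ‖x‖ * ‖q‖ := by
        gcongr with n
        · exact norm_le_pi_norm x n
        · exact norm_le_pi_norm q n
    _ = N * ‖x‖ * ‖q‖ := by simp [mul_assoc]

def dotCLM (q : Fin N → ℝ) : (Fin N → ℝ) →L[ℝ] ℝ := ∑ n, q n • ContinuousLinearMap.proj n

@[simp]
lemma dotCLM_apply (q x : Fin N → ℝ) : dotCLM q x = dot x q := by
  simp [dotCLM, dot, mul_comm]

lemma hasFDerivAt_dot (q x : Fin N → ℝ) : HasFDerivAt (fun y => dot y q) (dotCLM q) x := by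
  have h : ⇑(dotCLM q) = fun y => dot y q := funext (dotCLM_apply q)
  exact h ▸ (dotCLM q).hasFDerivAt

lemma dotCLM_injective : Injective (dotCLM (N := N)) := fun q₁ q₂ h => by
  funext m
  simpa [dot_single_left] using congrArg (fun L => L (Pi.single m 1)) h

end Dot

section Indirect

variable {Q : Set (Fin N → ℝ)} {p : (Fin N → ℝ) → ℝ}

lemma bddAbove_image_dot_sub (hQ : IsCompact Q) (hp : BddBelow (p '' Q)) (x : Fin N → ℝ) :
    BddAbove ((fun z => dot x z - p z) '' Q) := by
  obtain ⟨C, hC⟩ := (hQ.image (f := fun z => dot x z) (by fun_prop)).bddAbove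
  obtain ⟨c, hc⟩ := hp
  refine ⟨C - c, ?_⟩
  rintro _ ⟨z, hz, rfl⟩
  linarith [hC (mem_image_of_mem _ hz), hc (mem_image_of_mem _ hz)]

lemma le_indirect (hQ : IsCompact Q) (hp : BddBelow (p '' Q)) {z : Fin N → ℝ} (hz : z ∈ Q)
    (x : Fin N → ℝ) : dot x z - p z ≤ indirect Q p x :=
  le_csSup (bddAbove_image_dot_sub hQ hp x) (mem_image_of_mem _ hz)

lemma indirect_le (hQ : Q.Nonempty) {x : Fin N → ℝ} {a : ℝ}
    (h : ∀ z ∈ Q, dot x z - p z ≤ a) : indirect Q p x ≤ a :=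
  csSup_le (hQ.image _) (forall_mem_image.2 h)

lemma exists_lipschitzWith_indirect (hQ : IsCompact Q) (hQne : Q.Nonempty)
    (hp : BddBelow (p '' Q)) : ∃ K, LipschitzWith K (indirect Q p) := by
  obtain ⟨R, hR⟩ := hQ.isBounded.exists_norm_le
  refine ⟨_, LipschitzWith.of_le_add_mul' (N * R) fun x y => indirect_le hQne fun z hz => ?_⟩
  have hdot : dot x z = dot y z + dot (x - y) z := by
    simp only [dot_eq_dotProduct, sub_dotProduct]; ring
  have hxy : dot (x - y) z ≤ N * R * dist x y :=
    calc dot (x - y) z ≤ N * ‖x - y‖ * ‖z‖ := (le_abs_self _).trans (abs_dot_le _ _)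
      _ ≤ N * R * dist x y := by
        rw [dist_eq_norm, mul_right_comm]; gcongr; exact hR z hz
  linarith [le_indirect hQ hp hz y]

lemma continuous_indirect (hQ : IsCompact Q) (hQne : Q.Nonempty) (hp : BddBelow (p '' Q)) :
    Continuous (indirect Q p) :=
  (exists_lipschitzWith_indirect hQ hQne hp).choose_spec.continuous

end Indirect

def surplus (X Q : Set (Fin N → ℝ)) (p : (Fin N → ℝ) → ℝ) (x z : Fin N → ℝ) : ℝ :=
  dot x z - envelope X Q p z

def demand (X Q : Set (Fin N → ℝ)) (p : (Fin N → ℝ) → ℝ) (x : Fin N → ℝ) : Set (Fin N → ℝ) :=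
  {z ∈ Q | IsMaxOn (surplus X Q p x) Q z}

section Envelope

variable {X Q : Set (Fin N → ℝ)} {p : (Fin N → ℝ) → ℝ} {x : Fin N → ℝ}

lemma surplus_le_indirect (hX : IsCompact X) (hu : Continuous (indirect Q p)) (hx : x ∈ X)
    (z : Fin N → ℝ) : surplus X Q p x z ≤ indirect Q p x := by
  have : dot x z - indirect Q p x ≤ envelope X Q p z :=
    le_csSup (hX.image (f := fun x => dot x z - indirect Q p x) (by fun_prop)).bddAbove
      (mem_image_of_mem _ hx)
  rw [surplus]; linarith

lemma envelope_le (hX : X.Nonempty) (hQ : IsCompact Q) (hp : BddBelow (p '' Q))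
    {z : Fin N → ℝ} (hz : z ∈ Q) : envelope X Q p z ≤ p z :=
  csSup_le (hX.image _) (forall_mem_image.2 fun x _ => by linarith [le_indirect hQ hp hz x])

lemma continuous_envelope (hX : IsCompact X) (hu : Continuous (indirect Q p)) :
    Continuous (envelope X Q p) :=
  hX.continuous_sSup (f := fun z x => dot x z - indirect Q p x) (by fun_prop)

lemma continuous_surplus (hX : IsCompact X) (hu : Continuous (indirect Q p)) (x : Fin N → ℝ) :
    Continuous (surplus X Q p x) := by
  have := continuous_envelope hX hu
  unfold surplus; fun_prop

lemma indirect_eq_sSup_surplus (hX : IsCompact X) (hXne : X.Nonempty) (hQ : IsCompact Q)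
    (hQne : Q.Nonempty) (hp : BddBelow (p '' Q)) (hx : x ∈ X) :
    indirect Q p x = sSup (surplus X Q p x '' Q) := by
  have hu := continuous_indirect hQ hQne hp
  refine le_antisymm (indirect_le hQne fun z hz => ?_)
    (csSup_le (hQne.image _) (forall_mem_image.2 fun z _ => surplus_le_indirect hX hu hx z))
  have := envelope_le hXne hQ hp hz
  calc dot x z - p z ≤ surplus X Q p x z := by rw [surplus]; linarith
    _ ≤ _ := le_csSup ((hQ.image (continuous_surplus hX hu x)).bddAbove) (mem_image_of_mem _ hz)

end Envelope

section Demand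

variable {X Q : Set (Fin N → ℝ)} {p : (Fin N → ℝ) → ℝ} {x z : Fin N → ℝ}

lemma mem_demandSet_iff {q : Fin N → ℝ} (hq : q ∈ Q) :
    x ∈ demandSet X Q p q ↔ x ∈ X ∧ q ∈ demand X Q p x := by
  simp [demandSet, demand, isMaxOn_iff, surplus, hq]

lemma isClosed_demandSet (hX : IsClosed X) (q : Fin N → ℝ) : IsClosed (demandSet X Q p q) := by
  have : demandSet X Q p q = X ∩ ⋂ z ∈ Q, {x | surplus X Q p x z ≤ surplus X Q p x q} := by
    ext x; simp [demandSet, surplus]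
  rw [this]
  exact hX.inter <| isClosed_biInter fun z _ => isClosed_le (by unfold surplus; fun_prop)
    (by unfold surplus; fun_prop)

lemma demand_nonempty (hX : IsCompact X) (hQ : IsCompact Q) (hQne : Q.Nonempty)
    (hu : Continuous (indirect Q p)) (x : Fin N → ℝ) : (demand X Q p x).Nonempty :=
  hQ.exists_isMaxOn hQne (continuous_surplus hX hu x).continuousOn

lemma mem_demand_of_indirect_le (hX : IsCompact X) (hu : Continuous (indirect Q p)) (hx : x ∈ X)
    (hz : z ∈ Q) (h : indirect Q p x ≤ surplus X Q p x z) : z ∈ demand X Q p x :=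
  ⟨hz, fun w _ => (surplus_le_indirect hX hu hx w).trans h⟩

lemma surplus_eq_indirect_of_mem_demand (hX : IsCompact X) (hXne : X.Nonempty)
    (hQ : IsCompact Q) (hp : BddBelow (p '' Q)) (hx : x ∈ X) (hz : z ∈ demand X Q p x) :
    surplus X Q p x z = indirect Q p x := by
  have hu := continuous_indirect hQ ⟨z, hz.1⟩ hp
  refine le_antisymm (surplus_le_indirect hX hu hx z) (indirect_le ⟨z, hz.1⟩ fun w hw => ?_)
  have := envelope_le hXne hQ hp hw
  calc dot x w - p w ≤ surplus X Q p x w := by rw [surplus]; linarith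
    _ ≤ surplus X Q p x z := hz.2 hw

/-- At a point of differentiability of `u = indirect Q p`, every demanded bundle equals `∇u`. -/
lemma demand_subsingleton_of_differentiableAt (hX : IsCompact X) (hXne : X.Nonempty)
    (hQ : IsCompact Q) (hp : BddBelow (p '' Q)) (hx : x ∈ interior X)
    (hd : DifferentiableAt ℝ (indirect Q p) x) : (demand X Q p x).Subsingleton := by
  have hgrad : ∀ z ∈ demand X Q p x, fderiv ℝ (indirect Q p) x = dotCLM z := by
    intro z hz
    have hu := continuous_indirect hQ ⟨z, hz.1⟩ hp
    have hmin : IsLocalMin (fun y => indirect Q p y - dot y z) x :=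
      Filter.mem_of_superset (mem_interior_iff_mem_nhds.1 hx) fun y hy => by
        have h₁ := surplus_le_indirect hX hu hy z
        have h₂ := surplus_eq_indirect_of_mem_demand hX hXne hQ hp (interior_subset hx) hz
        simp only [surplus] at h₁ h₂
        show indirect Q p x - dot x z ≤ indirect Q p y - dot y z
        linarith
    exact sub_eq_zero.1 (hmin.hasFDerivAt_eq_zero (hd.hasFDerivAt.sub (hasFDerivAt_dot z x)))
  exact fun z₁ h₁ z₂ h₂ => dotCLM_injective ((hgrad z₁ h₁).symm.trans (hgrad z₂ h₂))

/-- Rademacher's theorem for the Lipschitz function `indirect Q p`, together with the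
nullity of the boundary of a convex set. -/
lemma ae_demand_subsingleton (hXc : Convex ℝ X) (hX : IsCompact X) (hXne : X.Nonempty)
    (hQ : IsCompact Q) (hQne : Q.Nonempty) (hp : BddBelow (p '' Q)) :
    ∀ᵐ x, x ∈ X → (demand X Q p x).Subsingleton := by
  obtain ⟨K, hK⟩ := exists_lipschitzWith_indirect hQ hQne hp
  filter_upwards [hK.ae_differentiableAt (μ := volume), hXc.ae_mem_interior volume]
    with x hd hint hx
  exact demand_subsingleton_of_differentiableAt hX hXne hQ hp (hint hx) hd

end Demand

section Box

lemma zero_mem_box : (0 : Fin N → ℝ) ∈ box 0 1 := by simp [box, Pi.le_def]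

lemma isCompact_box (a b : ℝ) : IsCompact (box a b : Set (Fin N → ℝ)) := isCompact_Icc

lemma measurableSet_box (a b : ℝ) : MeasurableSet (box a b : Set (Fin N → ℝ)) := measurableSet_Icc

lemma update_mem_box {a b c : ℝ} {y : Fin N → ℝ} (hy : y ∈ box a b) (n : Fin N)
    (hc : c ∈ Icc a b) : update y n c ∈ box a b := by
  simp only [box, mem_Icc, Pi.le_def] at hy ⊢
  refine ⟨fun m => ?_, fun m => ?_⟩ <;> rcases eq_or_ne m n with rfl | h <;>
    simp_all [update_of_ne]

end Box

/-- `∫ w dμ` for the transformed measure `μ` of `[0,1]^N` (its lower faces carry no mass). -/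
def integralMu (f w : (Fin N → ℝ) → ℝ) : ℝ :=
  (∑ n, ∫ y in box 0 1, w (update y n 1) * f (update y n 1)) - ∫ y in box 0 1, w y * phi f y

def MuMeasurable (w : (Fin N → ℝ) → ℝ) : Prop :=
  AEStronglyMeasurable w (volume.restrict (box 0 1)) ∧
    ∀ n, AEStronglyMeasurable (fun y => w (update y n 1)) (volume.restrict (box 0 1))

lemma _root_.Continuous.muMeasurable {w : (Fin N → ℝ) → ℝ} (hw : Continuous w) : MuMeasurable w :=
  ⟨hw.aestronglyMeasurable, fun _ => by fun_prop⟩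

lemma muMeasurable_of_tendsto {ι : Type*} {l : Filter ι} [l.NeBot] [l.IsCountablyGenerated]
    {G : ι → (Fin N → ℝ) → ℝ} {g : (Fin N → ℝ) → ℝ} (hG : ∀ i, MuMeasurable (G i))
    (hlim : ∀ y ∈ box 0 1, Tendsto (fun i => G i y) l (𝓝 (g y))) : MuMeasurable g := by
  refine ⟨aestronglyMeasurable_of_tendsto_ae l (fun i => (hG i).1)
    (ae_restrict_of_forall_mem (measurableSet_box 0 1) hlim), fun n => ?_⟩
  exact aestronglyMeasurable_of_tendsto_ae l (fun i => (hG i).2 n)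
    (ae_restrict_of_forall_mem (measurableSet_box 0 1) fun y hy =>
      hlim _ (update_mem_box hy n ⟨zero_le_one, le_rfl⟩))

section Density

variable {f : (Fin N → ℝ) → ℝ}

lemma continuousOn_density_face (hf : DensityHyp 0 1 f) (n : Fin N) :
    ContinuousOn (fun y => f (update y n 1)) (box 0 1) :=
  hf.2.2.1.comp (by fun_prop) fun _ hy => update_mem_box hy n ⟨zero_le_one, le_rfl⟩

lemma integrableOn_mul_density_face (hf : DensityHyp 0 1 f) {w : (Fin N → ℝ) → ℝ}
    (hw : Continuous w) (n : Fin N) :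
    IntegrableOn (fun y => w (update y n 1) * f (update y n 1)) (box 0 1) :=
  (ContinuousOn.mul (by fun_prop) (continuousOn_density_face hf n)).integrableOn_compact
    (isCompact_box 0 1)

lemma aestronglyMeasurable_phi (hf : DensityHyp 0 1 f) :
    AEStronglyMeasurable (phi f) (volume.restrict (box 0 1)) := by
  have : Measurable fun x : Fin N → ℝ => ∑ n, x n * fderiv ℝ f x (Pi.single n 1) :=
    Finset.measurable_sum _ fun n _ =>
      (measurable_pi_apply n).mul (measurable_fderiv_apply_const ℝ f _)
  exact this.aestronglyMeasurable.add
    ((hf.2.2.1.aestronglyMeasurable (measurableSet_box 0 1)).const_mul _)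

lemma exists_ae_abs_phi_le (hf : DensityHyp 0 1 f) :
    ∃ M, ∀ᵐ y ∂(volume.restrict (box 0 1)), |phi f y| ≤ M := by
  obtain ⟨M, hM⟩ := hf.2.2.2.2.2
  refine ⟨M, (ae_restrict_iff' (measurableSet_box 0 1)).2 ?_⟩
  filter_upwards [(convex_Icc _ _).ae_mem_interior volume] with y hy hyb
  exact hM y (hy hyb)

lemma integrable_mul_phi (hf : DensityHyp 0 1 f) {w : (Fin N → ℝ) → ℝ} (hw : Continuous w) :
    IntegrableOn (fun y => w y * phi f y) (box 0 1) := by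
  obtain ⟨M, hM⟩ := exists_ae_abs_phi_le hf
  obtain ⟨C, hC⟩ := (isCompact_box 0 1).exists_bound_of_continuousOn hw.continuousOn
  refine Integrable.bdd_mul (c := C)
    ((integrableOn_const (C := M) (isCompact_box 0 1).measure_lt_top.ne).mono'
      (aestronglyMeasurable_phi hf) (by simpa using hM))
    hw.aestronglyMeasurable (ae_restrict_of_forall_mem (measurableSet_box 0 1) hC)

lemma TR_eq_integralMu (Q : Set (Fin N → ℝ)) (p : (Fin N → ℝ) → ℝ) :
    TR 0 1 f Q p = integralMu f (indirect Q p) := by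
  norm_num [TR, integralMu]

lemma mu_eq_integralMu_indicator {A : Set (Fin N → ℝ)} (hA : MeasurableSet A) :
    mu 0 1 f A = integralMu f (A.indicator 1) := by
  have hface : ∀ (n : Fin N) (y : Fin N → ℝ),
      A.indicator 1 (update y n 1) * f (update y n 1) = A.indicator f (update y n 1) := by
    intro n y; by_cases h : update y n 1 ∈ A <;> simp [h]
  have hphi : ∫ y in box 0 1, A.indicator 1 y * phi f y = ∫ x in A ∩ box 0 1, phi f x := by
    rw [← Measure.restrict_restrict hA, ← integral_indicator hA]
    congr 1; ext y; by_cases h : y ∈ A <;> simp [h]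
  simp only [mu, bInt, integralMu, hface, hphi]
  norm_num

lemma integralMu_const_mul (c : ℝ) (w : (Fin N → ℝ) → ℝ) :
    integralMu f (fun y => c * w y) = c * integralMu f w := by
  simp only [integralMu, mul_assoc, integral_const_mul, ← Finset.mul_sum, mul_sub]

lemma integralMu_neg (w : (Fin N → ℝ) → ℝ) :
    integralMu f (fun y => -w y) = -integralMu f w := by
  simpa using integralMu_const_mul (f := f) (-1) w

lemma integralMu_sub (hf : DensityHyp 0 1 f) {w₁ w₂ : (Fin N → ℝ) → ℝ} (hw₁ : Continuous w₁)
    (hw₂ : Continuous w₂) :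
    integralMu f (fun y => w₁ y - w₂ y) = integralMu f w₁ - integralMu f w₂ := by
  simp only [integralMu, sub_mul]
  rw [integral_sub (integrable_mul_phi hf hw₁) (integrable_mul_phi hf hw₂)]
  simp only [fun n => integral_sub (integrableOn_mul_density_face hf hw₁ n)
    (integrableOn_mul_density_face hf hw₂ n), Finset.sum_sub_distrib]
  ring

lemma tendsto_integralMu (hf : DensityHyp 0 1 f) {ι : Type*} {l : Filter ι}
    [l.IsCountablyGenerated] {G : ι → (Fin N → ℝ) → ℝ} {g : (Fin N → ℝ) → ℝ} {C : ℝ}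
    (hGm : ∀ᶠ i in l, MuMeasurable (G i)) (hGb : ∀ᶠ i in l, ∀ y ∈ box 0 1, |G i y| ≤ C)
    (hlim : ∀ y ∈ box 0 1, Tendsto (fun i => G i y) l (𝓝 (g y))) :
    Tendsto (fun i => integralMu f (G i)) l (𝓝 (integralMu f g)) := by
  have hface : ∀ y ∈ box (0 : ℝ) 1, ∀ n : Fin N, update y n 1 ∈ box 0 1 :=
    fun y hy n => update_mem_box hy n ⟨zero_le_one, le_rfl⟩
  refine (tendsto_finsetSum _ fun n _ => ?_).sub ?_
  · refine tendsto_integral_filter_of_dominated_convergence (fun y => C * f (update y n 1))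
      (hGm.mono fun i h => (h.2 n).mul
        ((continuousOn_density_face hf n).aestronglyMeasurable (measurableSet_box 0 1)))
      (hGb.mono fun i h => ae_restrict_of_forall_mem (measurableSet_box 0 1) fun y hy => ?_)
      (((continuousOn_density_face hf n).integrableOn_compact (isCompact_box 0 1)).const_mul C)
      (ae_restrict_of_forall_mem (measurableSet_box 0 1) fun y hy =>
        (hlim _ (hface y hy n)).mul_const _)
    rw [norm_mul, Real.norm_eq_abs, Real.norm_eq_abs, abs_of_nonneg (hf.1 _)]
    exact mul_le_mul_of_nonneg_right (h _ (hface y hy n)) (hf.1 _)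
  · obtain ⟨M, hM⟩ := exists_ae_abs_phi_le hf
    refine tendsto_integral_filter_of_dominated_convergence (fun _ => C * M)
      (hGm.mono fun i h => h.1.mul (aestronglyMeasurable_phi hf))
      (hGb.mono fun i h => ?_) (integrableOn_const (isCompact_box 0 1).measure_lt_top.ne)
      (ae_restrict_of_forall_mem (measurableSet_box 0 1) fun y hy => (hlim y hy).mul_const _)
    filter_upwards [hM, ae_restrict_mem (measurableSet_box 0 1)] with y hMy hy
    rw [norm_mul, Real.norm_eq_abs, Real.norm_eq_abs]
    exact mul_le_mul (h y hy) hMy (abs_nonneg _) ((abs_nonneg _).trans (h y hy))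

lemma integralMu_indicator_le (hf : DensityHyp 0 1 f) {A B : Set (Fin N → ℝ)}
    (hB : MeasurableSet B) (hAB : A ∩ box 0 1 ⊆ B) (hae : A =ᵐ[volume.restrict (box 0 1)] B) :
    integralMu f (A.indicator 1) ≤ integralMu f (B.indicator 1) := by
  unfold integralMu
  refine sub_le_sub (Finset.sum_le_sum fun n _ => ?_) (integral_congr_ae ?_).le
  · refine integral_mono_of_nonneg (Eventually.of_forall fun y => ?_) ?_
      (ae_restrict_of_forall_mem (measurableSet_box 0 1) fun y hy => ?_)
    · exact mul_nonneg (indicator_nonneg (fun _ _ => zero_le_one) _) (hf.1 _)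
    · refine ((continuousOn_density_face hf n).integrableOn_compact (isCompact_box 0 1)).bdd_mul
        (c := 1) ((measurable_const.indicator hB).comp (by fun_prop)).aestronglyMeasurable
        (Eventually.of_forall fun y => ?_)
      by_cases h : update y n 1 ∈ B <;> simp [h]
    · have hy' := update_mem_box hy n ⟨zero_le_one, le_rfl⟩
      refine mul_le_mul_of_nonneg_right ?_ (hf.1 _)
      by_cases h : update y n 1 ∈ A
      · simp [h, hAB ⟨h, hy'⟩]
      · simp [h, indicator_nonneg]
  · filter_upwards [indicator_ae_eq_of_ae_eq_set (f := (1 : (Fin N → ℝ) → ℝ)) hae] with y hy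
    rw [hy]

end Density

section Optimality

variable {f : (Fin N → ℝ) → ℝ} {Q : Set (Fin N → ℝ)} {p : (Fin N → ℝ) → ℝ}

theorem integralMu_nonpos_of_optimal (hf : DensityHyp 0 1 f) (hQ : IsCompact Q)
    (hQne : Q.Nonempty) (hopt : Optimal 0 1 f Q p) {P : ℝ → (Fin N → ℝ) → ℝ}
    (hP : ∀ t, Feasible Q (P t)) {g : (Fin N → ℝ) → ℝ} {C : ℝ}
    (hb : ∀ᶠ t in 𝓝[>] 0, ∀ y ∈ box 0 1, |t⁻¹ * (indirect Q (P t) y - indirect Q p y)| ≤ C)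
    (hlim : ∀ y ∈ box 0 1,
      Tendsto (fun t => t⁻¹ * (indirect Q (P t) y - indirect Q p y)) (𝓝[>] 0) (𝓝 (g y))) :
    integralMu f g ≤ 0 := by
  have hu := continuous_indirect hQ hQne hopt.1.1
  have huP : ∀ t, Continuous (indirect Q (P t)) := fun t => continuous_indirect hQ hQne (hP t).1
  refine le_of_tendsto (tendsto_integralMu hf
    (G := fun t y => t⁻¹ * (indirect Q (P t) y - indirect Q p y))
    (Eventually.of_forall fun t => (continuous_const.mul ((huP t).sub hu)).muMeasurable) hb hlim) ?_
  filter_upwards [self_mem_nhdsWithin] with t (ht : 0 < t)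
  rw [integralMu_const_mul, integralMu_sub hf (huP t) hu, ← TR_eq_integralMu, ← TR_eq_integralMu]
  exact mul_nonpos_of_nonneg_of_nonpos (inv_nonneg.2 ht.le) (sub_nonpos.2 (hopt.2 _ (hP t)))

end Optimality

section Undercut

variable {X Q : Set (Fin N → ℝ)} {p : (Fin N → ℝ) → ℝ}

lemma indirect_update_of_le (hQ : IsCompact Q) (hp : BddBelow (p '' Q)) {q : Fin N → ℝ}
    (hq : q ∈ Q) {a : ℝ} (ha : a ≤ p q) (x : Fin N → ℝ) :
    indirect Q (update p q a) x = max (indirect Q p x) (dot x q - a) := by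
  have hp' := bddBelow_image_update hp q a
  refine le_antisymm (indirect_le ⟨q, hq⟩ fun z hz => ?_)
    (max_le (indirect_le ⟨q, hq⟩ fun z hz => ?_) (by simpa using le_indirect hQ hp' hq x))
  · rcases eq_or_ne z q with rfl | h
    · simp
    · rw [update_of_ne h]; exact (le_indirect hQ hp hz x).trans (le_max_left _ _)
  · have := le_indirect hQ hp' hz x
    rcases eq_or_ne z q with rfl | h
    · simp only [update_self] at this; linarith
    · simpa [update_of_ne h] using this

lemma indirect_undercut_sub (hXne : X.Nonempty) (hQ : IsCompact Q) (hp : BddBelow (p '' Q))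
    {q : Fin N → ℝ} (hq : q ∈ Q) {t : ℝ} (ht : 0 ≤ t) (x : Fin N → ℝ) :
    indirect Q (update p q (envelope X Q p q - t)) x - indirect Q p x =
      max 0 (surplus X Q p x q - indirect Q p x + t) := by
  rw [indirect_update_of_le hQ hp hq (by linarith [envelope_le hXne hQ hp hq]),
    ← max_sub_sub_right, sub_self, surplus]
  ring_nf

end Undercut

theorem mu_demandSet_nonpos {f : (Fin N → ℝ) → ℝ} (hf : DensityHyp 0 1 f)
    {Q : Set (Fin N → ℝ)} (hQc : IsCompact Q) (hQ0 : (0 : Fin N → ℝ) ∈ Q)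
    {p : (Fin N → ℝ) → ℝ} (hopt : Optimal 0 1 f Q p) {q : Fin N → ℝ} (hq : q ∈ Q) (hq0 : q ≠ 0) :
    mu 0 1 f (demandSet (box 0 1) Q p q) ≤ 0 := by
  obtain ⟨hp, hp0⟩ := hopt.1
  have hu := continuous_indirect hQc ⟨0, hQ0⟩ hp
  have hX := isCompact_box (N := N) 0 1
  have hs : ∀ y ∈ box 0 1, surplus (box 0 1) Q p y q - indirect Q p y ≤ 0 := fun y hy =>
    sub_nonpos.2 (surplus_le_indirect hX hu hy q)
  rw [mu_eq_integralMu_indicator ((isClosed_demandSet hX.isClosed q).measurableSet)]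
  refine integralMu_nonpos_of_optimal hf hQc ⟨0, hQ0⟩ hopt (C := 1)
    (P := fun t => update p q (envelope (box 0 1) Q p q - t))
    (fun t => ⟨bddBelow_image_update hp _ _, by rw [update_of_ne hq0.symm, hp0]⟩) ?_ fun y hy => ?_
  · filter_upwards [self_mem_nhdsWithin] with t (ht : 0 < t) y hy
    rw [indirect_undercut_sub ⟨0, zero_mem_box⟩ hQc hp hq ht.le]
    exact abs_inv_mul_max_zero_add_le (hs y hy) ht
  · have hD : (demandSet (box 0 1) Q p q).indicator 1 y =
        if surplus (box 0 1) Q p y q - indirect Q p y = 0 then (1 : ℝ) else 0 := by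
      split_ifs with h
      · exact indicator_of_mem ((mem_demandSet_iff hq).2
          ⟨hy, mem_demand_of_indirect_le hX hu hy hq (by linarith)⟩) _
      · refine indicator_of_notMem (fun hyD => h ?_) _
        rw [surplus_eq_indirect_of_mem_demand hX ⟨0, zero_mem_box⟩ hQc hp hy
          ((mem_demandSet_iff hq).1 hyD).2, sub_self]
    rw [hD]
    refine (tendsto_inv_mul_max_zero_add (hs y hy)).congr' ?_
    filter_upwards [self_mem_nhdsWithin] with t (ht : 0 < t)
    rw [indirect_undercut_sub ⟨0, zero_mem_box⟩ hQc hp hq ht.le]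

def raise (X Q : Set (Fin N → ℝ)) (p c : (Fin N → ℝ) → ℝ) (t : ℝ) : (Fin N → ℝ) → ℝ :=
  update (fun z => envelope X Q p z + t * c z) 0 0

section Raise

variable {f : (Fin N → ℝ) → ℝ} {X Q : Set (Fin N → ℝ)} {p c : (Fin N → ℝ) → ℝ}
  {x : Fin N → ℝ}

lemma feasible_raise (hX : IsCompact X) (hQ : IsCompact Q) (hu : Continuous (indirect Q p))
    (hc : Continuous c) (t : ℝ) : Feasible Q (raise X Q p c t) := by
  have := continuous_envelope hX hu
  exact ⟨bddBelow_image_update (hQ.image (by fun_prop)).bddBelow 0 0, update_self ..⟩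

/-- Since `0` is a limit of nonzero bundles and `c 0 = 0`, keeping `0` free changes nothing. -/
lemma indirect_raise (hX : IsCompact X) (hXne : X.Nonempty) (hQ : IsCompact Q)
    (hQ0 : (0 : Fin N → ℝ) ∈ Q) (hcl : (0 : Fin N → ℝ) ∈ closure (Q \ {0}))
    (hp : Feasible Q p) (hc : Continuous c) (hc0 : c 0 = 0) (t : ℝ) :
    indirect Q (raise X Q p c t) x = sSup ((fun z => surplus X Q p x z - t * c z) '' Q) := by
  have hu := continuous_indirect hQ ⟨0, hQ0⟩ hp.1
  have hcont : Continuous fun z => surplus X Q p x z - t * c z := by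
    have := continuous_surplus hX hu x; fun_prop
  have hbdd := (hQ.image hcont).bddAbove
  have hraise : ∀ z ≠ 0, dot x z - raise X Q p c t z = surplus X Q p x z - t * c z := by
    intro z hz; rw [raise, update_of_ne hz, surplus]; ring
  refine le_antisymm (indirect_le ⟨0, hQ0⟩ fun z hz => ?_)
    (csSup_le ⟨_, mem_image_of_mem _ hQ0⟩ (forall_mem_image.2 fun z hz => ?_))
  · rcases eq_or_ne z 0 with rfl | h
    · have := le_csSup hbdd (mem_image_of_mem _ hQ0)
      beta_reduce at this
      rw [surplus, dot_zero_right, hc0, mul_zero, sub_zero, zero_sub] at this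
      simp only [raise, update_self, dot_zero_right, sub_zero]
      linarith [envelope_le hXne hQ hp.1 hQ0, hp.2]
    · exact hraise z h ▸ le_csSup hbdd (mem_image_of_mem _ hz)
  · have hQcl : Q ⊆ closure (Q \ {0}) := fun z hz => by
      rcases eq_or_ne z 0 with rfl | h
      · exact hcl
      · exact subset_closure ⟨hz, h⟩
    refine closure_minimal (fun z hz => ?_) (isClosed_le hcont continuous_const) (hQcl hz)
    exact (hraise z hz.2).symm.trans_le
      (le_indirect hQ (feasible_raise hX hQ hu hc t).1 hz.1 x)

lemma abs_indirect_raise_sub_le (hX : IsCompact X) (hXne : X.Nonempty) (hQ : IsCompact Q)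
    (hQ0 : (0 : Fin N → ℝ) ∈ Q) (hcl : (0 : Fin N → ℝ) ∈ closure (Q \ {0}))
    (hp : Feasible Q p) (hc : Continuous c) (hc0 : c 0 = 0) (hx : x ∈ X) {B : ℝ}
    (hB : ∀ z ∈ Q, |c z| ≤ B) (t : ℝ) :
    |indirect Q (raise X Q p c t) x - indirect Q p x| ≤ |t| * B := by
  have hu := continuous_indirect hQ ⟨0, hQ0⟩ hp.1
  rw [indirect_raise hX hXne hQ hQ0 hcl hp hc hc0,
    indirect_eq_sSup_surplus hX hXne hQ ⟨0, hQ0⟩ hp.1 hx]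
  have := continuous_surplus hX hu x
  refine abs_sSup_image_sub_sSup_image_le ⟨0, hQ0⟩ (hQ.image (by fun_prop)).bddAbove
    (hQ.image this).bddAbove fun z hz => ?_
  rw [sub_sub_cancel_left, abs_neg, abs_mul]
  exact mul_le_mul_of_nonneg_left (hB z hz) (abs_nonneg t)

lemma tendsto_indirect_raise (hX : IsCompact X) (hXne : X.Nonempty) (hQ : IsCompact Q)
    (hQ0 : (0 : Fin N → ℝ) ∈ Q) (hcl : (0 : Fin N → ℝ) ∈ closure (Q \ {0}))
    (hp : Feasible Q p) (hc : Continuous c) (hc0 : c 0 = 0) (hx : x ∈ X) :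
    Tendsto (fun t => t⁻¹ * (indirect Q (raise X Q p c t) x - indirect Q p x)) (𝓝[>] 0)
      (𝓝 (-sInf (c '' demand X Q p x))) := by
  have hu := continuous_indirect hQ ⟨0, hQ0⟩ hp.1
  simp only [indirect_raise hX hXne hQ hQ0 hcl hp hc hc0,
    indirect_eq_sSup_surplus hX hXne hQ ⟨0, hQ0⟩ hp.1 hx]
  exact hQ.tendsto_slope_sSup_image_sub_mul ⟨0, hQ0⟩ (continuous_surplus hX hu x) hc

lemma muMeasurable_sInf_demand (hQ : IsCompact Q) (hQ0 : (0 : Fin N → ℝ) ∈ Q)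
    (hcl : (0 : Fin N → ℝ) ∈ closure (Q \ {0})) (hp : Feasible Q p) (hc : Continuous c)
    (hc0 : c 0 = 0) : MuMeasurable fun x => sInf (c '' demand (box 0 1) Q p x) := by
  have hX := isCompact_box (N := N) 0 1
  have hu := continuous_indirect hQ ⟨0, hQ0⟩ hp.1
  have hG : ∀ t, MuMeasurable fun y =>
      -(t⁻¹ * (indirect Q (raise (box 0 1) Q p c t) y - indirect Q p y)) := fun t =>
    have := continuous_indirect hQ ⟨0, hQ0⟩ (feasible_raise hX hQ hu hc t).1
    Continuous.muMeasurable (by fun_prop)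
  simpa using muMeasurable_of_tendsto hG fun y hy =>
    (tendsto_indirect_raise hX ⟨0, zero_mem_box⟩ hQ hQ0 hcl hp hc hc0 hy).neg

theorem integralMu_sInf_demand_nonneg (hf : DensityHyp 0 1 f) (hQ : IsCompact Q)
    (hQ0 : (0 : Fin N → ℝ) ∈ Q) (hcl : (0 : Fin N → ℝ) ∈ closure (Q \ {0}))
    (hopt : Optimal 0 1 f Q p) (hc : Continuous c) (hc0 : c 0 = 0) :
    0 ≤ integralMu f fun x => sInf (c '' demand (box 0 1) Q p x) := by
  have hX := isCompact_box (N := N) 0 1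
  have hu := continuous_indirect hQ ⟨0, hQ0⟩ hopt.1.1
  obtain ⟨B, hB⟩ := hQ.exists_bound_of_continuousOn hc.continuousOn
  have := integralMu_nonpos_of_optimal hf hQ ⟨0, hQ0⟩ hopt (P := raise (box 0 1) Q p c)
    (feasible_raise hX hQ hu hc) (C := B) ?_ fun y hy =>
      tendsto_indirect_raise hX ⟨0, zero_mem_box⟩ hQ hQ0 hcl hopt.1 hc hc0 hy
  · rw [integralMu_neg] at this
    exact neg_nonpos.1 this
  · filter_upwards [self_mem_nhdsWithin] with t (ht : 0 < t) y hy
    rw [abs_mul, abs_inv, inv_mul_le_iff₀ (abs_pos.2 ht.ne')]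
    exact abs_indirect_raise_sub_le hX ⟨0, zero_mem_box⟩ hQ hQ0 hcl hopt.1 hc hc0 hy hB t

end Raise

def tent {E : Type*} [SeminormedAddCommGroup E] (q : E) (r : ℝ) (z : E) : ℝ :=
  max 0 (1 - r * ‖z - q‖)

section Tent

variable {E : Type*} [NormedAddCommGroup E] {q z : E} {r : ℝ}

lemma continuous_tent (q : E) (r : ℝ) : Continuous (tent q r) := by
  unfold tent; fun_prop

lemma tent_nonneg : 0 ≤ tent q r z := le_max_left _ _

lemma tent_le_one (hr : 0 ≤ r) : tent q r z ≤ 1 :=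
  max_le zero_le_one (by simpa using mul_nonneg hr (norm_nonneg (z - q)))

lemma tent_self : tent q r q = 1 := by simp [tent]

lemma tent_eq_zero (h : 1 ≤ r * ‖z - q‖) : tent q r z = 0 :=
  max_eq_left (by linarith)

lemma eventually_tent_eq_zero (hz : 0 < ‖z - q‖) : ∀ᶠ r in atTop, tent q r z = 0 := by
  filter_upwards [eventually_ge_atTop ‖z - q‖⁻¹] with r hr
  exact tent_eq_zero ((inv_le_iff_one_le_mul₀ hz).1 hr)

lemma tendsto_sInf_tent_image {S : Set E} (hS : S.Nonempty) (h : ¬S ⊆ {q}) :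
    Tendsto (fun r => sInf (tent q r '' S)) atTop (𝓝 0) := by
  obtain ⟨z, hzS, hzq⟩ := not_subset.1 h
  refine squeeze_zero (fun r => le_csInf (hS.image _) (forall_mem_image.2 fun _ _ => tent_nonneg))
    (fun r => csInf_le ⟨0, forall_mem_image.2 fun _ _ => tent_nonneg⟩ (mem_image_of_mem _ hzS))
    (tendsto_const_nhds.congr' ?_)
  filter_upwards [eventually_tent_eq_zero (norm_pos_iff.2 (sub_ne_zero.2 hzq))] with r hr
  exact hr.symm

end Tent

theorem integralMu_indicator_demand_subset_singleton_nonneg {f : (Fin N → ℝ) → ℝ}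
    (hf : DensityHyp 0 1 f) {Q : Set (Fin N → ℝ)} (hQc : IsCompact Q) (hQ0 : (0 : Fin N → ℝ) ∈ Q)
    (hcl : (0 : Fin N → ℝ) ∈ closure (Q \ {0})) {p : (Fin N → ℝ) → ℝ}
    (hopt : Optimal 0 1 f Q p) {q : Fin N → ℝ} (hq0 : q ≠ 0) :
    0 ≤ integralMu f ({x | demand (box 0 1) Q p x ⊆ {q}}.indicator 1) := by
  have hu := continuous_indirect hQc ⟨0, hQ0⟩ hopt.1.1
  have hdem := demand_nonempty (X := box 0 1) (isCompact_box 0 1) hQc ⟨0, hQ0⟩ hu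
  have htent0 : ∀ᶠ r in atTop, tent q r 0 = 0 := by
    simpa using eventually_tent_eq_zero (q := q) (z := 0) (by simpa using hq0)
  refine ge_of_tendsto (tendsto_integralMu hf (C := 1)
    (htent0.mono fun r h => muMeasurable_sInf_demand hQc hQ0 hcl hopt.1 (continuous_tent q r) h)
    ((eventually_ge_atTop 0).mono fun r hr x _ => ?_) fun x _ => ?_)
    (htent0.mono fun r h => integralMu_sInf_demand_nonneg hf hQc hQ0 hcl hopt
      (continuous_tent q r) h)
  · obtain ⟨z, hz⟩ := hdem x
    rw [abs_of_nonneg (le_csInf ((hdem x).image _) (forall_mem_image.2 fun _ _ => tent_nonneg))]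
    exact (csInf_le ⟨0, forall_mem_image.2 fun _ _ => tent_nonneg⟩ (mem_image_of_mem _ hz)).trans
      (tent_le_one hr)
  · by_cases h : demand (box 0 1) Q p x ⊆ {q}
    · rw [indicator_of_mem (show x ∈ {x | demand (box 0 1) Q p x ⊆ {q}} from h)]
      simp [(hdem x).subset_singleton_iff.1 h, tent_self]
    · rw [indicator_of_notMem (show x ∉ {x | demand (box 0 1) Q p x ⊆ {q}} from h)]
      exact tendsto_sInf_tent_image (hdem x) h

theorem mu_demandSet_nonneg {f : (Fin N → ℝ) → ℝ} (hf : DensityHyp 0 1 f)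
    {Q : Set (Fin N → ℝ)} (hQconv : Convex ℝ Q) (hQc : IsCompact Q) (hQ0 : (0 : Fin N → ℝ) ∈ Q)
    {p : (Fin N → ℝ) → ℝ} (hopt : Optimal 0 1 f Q p) {q : Fin N → ℝ} (hq : q ∈ Q) (hq0 : q ≠ 0) :
    0 ≤ mu 0 1 f (demandSet (box 0 1) Q p q) := by
  have hX := isCompact_box (N := N) 0 1
  have hdem := demand_nonempty (X := box 0 1) hX hQc ⟨0, hQ0⟩
    (continuous_indirect hQc ⟨0, hQ0⟩ hopt.1.1)
  have hDmeas := (isClosed_demandSet (Q := Q) (p := p) hX.isClosed q).measurableSet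
  rw [mu_eq_integralMu_indicator hDmeas]
  refine (integralMu_indicator_demand_subset_singleton_nonneg hf hQc hQ0
    (hQconv.mem_closure_diff_singleton hQ0 hq hq0) hopt hq0).trans
    (integralMu_indicator_le hf hDmeas (fun x ⟨hxS, hx⟩ => ?_) ?_)
  · exact (mem_demandSet_iff hq).2 ⟨hx, (hdem x).subset_singleton_iff.1 hxS ▸ rfl⟩
  · filter_upwards [ae_restrict_of_ae (ae_demand_subsingleton (convex_Icc _ _) hX
      ⟨0, zero_mem_box⟩ hQc ⟨0, hQ0⟩ hopt.1.1), ae_restrict_mem (measurableSet_box 0 1)]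
      with x hsub hx
    refine propext ⟨fun hxS => ?_, fun hxD z hz => hsub hx hz ((mem_demandSet_iff hq).1 hxD).2⟩
    exact (mem_demandSet_iff hq).2 ⟨hx, (hdem x).subset_singleton_iff.1 hxS ▸ rfl⟩

theorem mu_demand_eq_zero_general
    {N : ℕ}
    (f : (Fin N → ℝ) → ℝ) (hf : DensityHyp 0 1 f)
    (Q : Set (Fin N → ℝ)) (hQ : QHyp Q)
    (p : (Fin N → ℝ) → ℝ) (hopt : Optimal 0 1 f Q p)
    (q : Fin N → ℝ) (hq : q ∈ Q) (hq0 : q ≠ 0) :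
    mu 0 1 f (demandSet (box 0 1) Q p q) = 0 := by
  obtain ⟨hQconv, hQc, -, -, hQ0⟩ := hQ
  exact le_antisymm (mu_demandSet_nonpos hf hQc hQ0 hopt hq hq0)
    (mu_demandSet_nonneg hf hQconv hQc hQ0 hopt hq hq0)

/-- when `X = [0,1]^N` (negligible bottom boundary), for any optimal
feasible price schedule and any nonzero bundle `q ∈ 𝒬`, `μ(D(q)) = 0`. -/
theorem mu_demand_eq_zero
    {N : ℕ} (hN : 0 < N)
    (f : (Fin N → ℝ) → ℝ) (hf : DensityHyp 0 1 f)
    (Q : Set (Fin N → ℝ)) (hQ : QHyp Q)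
    (p : (Fin N → ℝ) → ℝ) (hopt : Optimal 0 1 f Q p)
    (q : Fin N → ℝ) (hq : q ∈ Q) (hq0 : q ≠ 0) :
    mu 0 1 f (demandSet (box 0 1) Q p q) = 0 :=
  mu_demand_eq_zero_general f hf Q hQ p hopt q hq hq0

end Stmt9
end
end

section
/- For any feasible price schedule: if x ∈ D(q) and n is an outward unit normal to X at x (i.e., x ∈ S(n)), then for every ε > 0 such that q + ε·n ∈ 𝒬, one has D(q + ε·n) = D(q) ∩ S(n). -/
open Set

noncomputable section

namespace Stmt10

variable {N : ℕ}

/-- Dot product on `ℝ^N`. -/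
def dot (x q : Fin N → ℝ) : ℝ := ∑ n, x n * q n

lemma continuous_dot_left (q : Fin N → ℝ) : Continuous (fun y : Fin N → ℝ => dot y q) := by
  unfold dot
  exact continuous_finset_sum _ fun i _ => (continuous_apply i).mul continuous_const

lemma continuous_dot_right (y : Fin N → ℝ) : Continuous (fun q : Fin N → ℝ => dot y q) := by
  unfold dot
  exact continuous_finset_sum _ fun i _ => continuous_const.mul (continuous_apply i)

lemma dot_add_smul (y q n : Fin N → ℝ) (ε : ℝ) :
    dot y (q + ε • n) = dot y q + ε * dot y n := by
  unfold dot
  rw [Finset.mul_sum, ← Finset.sum_add_distrib]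
  congr 1; ext i; simp [Pi.add_apply, Pi.smul_apply]; ring

/-- The indirect utility `u(x) = sup_{q ∈ Q} (x·q − p(q))`. -/
def indirect (Q : Set (Fin N → ℝ)) (p : (Fin N → ℝ) → ℝ) (x : Fin N → ℝ) : ℝ :=
  sSup ((fun q => dot x q - p q) '' Q)

/-- The lower convex envelope `p̄(q) = sup_{x ∈ X} (x·q − u(x))`. -/
def envelope (X Q : Set (Fin N → ℝ)) (p : (Fin N → ℝ) → ℝ) (q : Fin N → ℝ) : ℝ :=
  sSup ((fun x => dot x q - indirect Q p x) '' X)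

/-- The demand set of a bundle `q`. -/
def demandSet (X Q : Set (Fin N → ℝ)) (p : (Fin N → ℝ) → ℝ) (q : Fin N → ℝ) :
    Set (Fin N → ℝ) :=
  {x ∈ X | ∀ q' ∈ Q, dot x q' - envelope X Q p q' ≤ dot x q - envelope X Q p q}

/-- The exposed face of `X` in direction `n`. -/
def face (X : Set (Fin N → ℝ)) (n : Fin N → ℝ) : Set (Fin N → ℝ) :=
  {x ∈ X | dot x n = sSup ((fun y => dot y n) '' X)}

/-- Lemma 3: for a feasible price schedule, if `x ∈ D(q)` lies in the
exposed face `S(n)` of `X` with outward unit normal `n`, then for every `ε > 0` with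
`q + ε·n ∈ 𝒬`, `D(q + ε·n) = D(q) ∩ S(n)`. -/
theorem demand_of_shifted_bundle
    (X : Set (Fin N → ℝ)) (hXcomp : IsCompact X) (hXconv : Convex ℝ X)
    (hXint : (interior X).Nonempty)
    (Q : Set (Fin N → ℝ)) (hQconv : Convex ℝ Q) (hQcomp : IsCompact Q)
    (hQ0 : (0 : Fin N → ℝ) ∈ Q)
    (p : (Fin N → ℝ) → ℝ) (hbdd : BddBelow (p '' Q)) (hp0 : p 0 = 0)
    (q : Fin N → ℝ) (hq : q ∈ Q)
    (x : Fin N → ℝ) (hx : x ∈ demandSet X Q p q)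
    (n : Fin N → ℝ) (hn : ‖n‖ = 1) (hxn : x ∈ face X n) :
    ∀ ε > (0 : ℝ), q + ε • n ∈ Q →
      demandSet X Q p (q + ε • n) = demandSet X Q p q ∩ face X n := by
  intro ε hε hqn
  have hxX : x ∈ X := hx.1
  have hXne : X.Nonempty := ⟨x, hxX⟩
  -- indirect utility is nonnegative
  have hind : ∀ y : Fin N → ℝ, 0 ≤ indirect Q p y := by
    intro y
    have hbA : BddAbove ((fun q => dot y q - p q) '' Q) := by
      obtain ⟨c, hc⟩ := hbdd
      obtain ⟨B, hB⟩ := (hQcomp.image (continuous_dot_right y)).bddAbove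
      refine ⟨B - c, ?_⟩
      rintro v ⟨q', hq', rfl⟩
      have h1 : dot y q' ≤ B := hB ⟨q', hq', rfl⟩
      have h2 : c ≤ p q' := hc ⟨q', hq', rfl⟩
      show dot y q' - p q' ≤ B - c
      linarith
    have : (0:ℝ) ∈ (fun q => dot y q - p q) '' Q := by
      refine ⟨0, hQ0, ?_⟩
      simp [dot, hp0]
    simpa [indirect] using le_csSup hbA this
  -- envelope sets are bounded above
  have hbE : ∀ q' : Fin N → ℝ, BddAbove ((fun y => dot y q' - indirect Q p y) '' X) := by
    intro q'
    obtain ⟨B, hB⟩ := (hXcomp.image (continuous_dot_left q')).bddAbove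
    refine ⟨B, ?_⟩
    rintro v ⟨y, hy, rfl⟩
    have h1 : dot y q' ≤ B := hB ⟨y, hy, rfl⟩
    have h2 := hind y
    show dot y q' - indirect Q p y ≤ B
    linarith
  have henv_ge : ∀ q' : Fin N → ℝ, ∀ y ∈ X,
      dot y q' - indirect Q p y ≤ envelope X Q p q' := by
    intro q' y hy
    exact le_csSup (hbE q') ⟨y, hy, rfl⟩
  -- M the support function value
  set M := sSup ((fun y => dot y n) '' X) with hM
  have hbM : BddAbove ((fun y => dot y n) '' X) := (hXcomp.image (continuous_dot_left n)).bddAbove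
  have hdotM : ∀ y ∈ X, dot y n ≤ M := fun y hy => le_csSup hbM ⟨y, hy, rfl⟩
  -- envelope (q+εn) ≤ envelope q + ε M
  have hle : envelope X Q p (q + ε • n) ≤ envelope X Q p q + ε * M := by
    apply csSup_le (hXne.image _)
    rintro v ⟨y, hy, rfl⟩
    show dot y (q + ε • n) - indirect Q p y ≤ _
    rw [dot_add_smul]
    have h1 := henv_ge q y hy
    have h2 : ε * dot y n ≤ ε * M := mul_le_mul_of_nonneg_left (hdotM y hy) hε.le
    linarith
  -- from x ∈ D(q): envelope q + ε M ≤ envelope (q+εn)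
  have hxM : dot x n = M := hxn.2
  have hge : envelope X Q p q + ε * M ≤ envelope X Q p (q + ε • n) := by
    have := hx.2 (q + ε • n) hqn
    rw [dot_add_smul, hxM] at this
    linarith
  have hkey : envelope X Q p (q + ε • n) = envelope X Q p q + ε * M :=
    le_antisymm hle hge
  ext y
  constructor
  · rintro ⟨hyX, hyD⟩
    have h1 := hyD q hq
    rw [dot_add_smul, hkey] at h1
    have hynM : M ≤ dot y n := by
      have hεpos := hε
      nlinarith
    have hyn : dot y n = M := le_antisymm (hdotM y hyX) hynM
    refine ⟨⟨hyX, ?_⟩, hyX, hyn⟩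
    intro q' hq'
    have h2 := hyD q' hq'
    rw [dot_add_smul, hkey, hyn] at h2
    linarith
  · rintro ⟨⟨hyX, hyD⟩, _, hyn⟩
    refine ⟨hyX, ?_⟩
    intro q' hq'
    have h2 := hyD q' hq'
    rw [dot_add_smul, hkey, hyn]
    linarith

end Stmt10
end
end

section
/- Let p be an optimal feasible price schedule. If q ∈ ∂𝒬 and there exists a unit vector v ∈ ℝ^N with v_n ≥ 0 for all n lying in the interior of the outward normal cone NC(q) = {w ∈ ℝ^N : w·(q̂ − q) ≤ 0 for all q̂ ∈ 𝒬}, then q is pooling, i.e., D(q) has positive measure under f(x)dx. -/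
open MeasureTheory Set

noncomputable section

namespace Stmt13

variable {N : ℕ}

/-- Dot product on `ℝ^N`. -/
def dot (x q : Fin N → ℝ) : ℝ := ∑ n, x n * q n

/-- The box `[a,b]^N`. -/
def box (a b : ℝ) : Set (Fin N → ℝ) := Icc (fun _ => a) (fun _ => b)

/-- `φ(x) = x·∇f(x) + (N+1)·f(x)`. -/
def phi (f : (Fin N → ℝ) → ℝ) (x : Fin N → ℝ) : ℝ :=
  (∑ n, x n * fderiv ℝ f x (Pi.single n 1)) + (N + 1) * f x

/-- The boundary integral `∫_{[x̲,x̄]^{N−1}} 1_A(ι_n^c(y)) f(ι_n^c(y)) dy`, written as an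
integral over the full box divided by the length of the redundant coordinate. -/
def bInt (xl xu : ℝ) (f : (Fin N → ℝ) → ℝ) (n : Fin N) (c : ℝ) (A : Set (Fin N → ℝ)) : ℝ :=
  (xu - xl)⁻¹ *
    ∫ y in box xl xu, A.indicator f (Function.update y n c)

/-- The transformed measure `μ` of the type distribution, as a set function:
`μ(A) = Σₙ (x̄·∫ 1_A(ι_n^{x̄}) f − x̲·∫ 1_A(ι_n^{x̲}) f) − ∫_{A} φ`. -/
def mu (xl xu : ℝ) (f : (Fin N → ℝ) → ℝ) (A : Set (Fin N → ℝ)) : ℝ :=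
  (∑ n, (xu * bInt xl xu f n xu A - xl * bInt xl xu f n xl A)) -
    ∫ x in A ∩ box xl xu, phi f x

/-- The indirect utility `u_p(x) = sup_{q ∈ Q} (x·q − p(q))`. -/
def indirect (Q : Set (Fin N → ℝ)) (p : (Fin N → ℝ) → ℝ) (x : Fin N → ℝ) : ℝ :=
  sSup ((fun q => dot x q - p q) '' Q)

/-- The lower convex envelope `p̄(q) = sup_{x ∈ X} (x·q − u_p(x))`. -/
def envelope (X Q : Set (Fin N → ℝ)) (p : (Fin N → ℝ) → ℝ) (q : Fin N → ℝ) : ℝ :=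
  sSup ((fun x => dot x q - indirect Q p x) '' X)

/-- The demand set of a bundle `q`. -/
def demandSet (X Q : Set (Fin N → ℝ)) (p : (Fin N → ℝ) → ℝ) (q : Fin N → ℝ) :
    Set (Fin N → ℝ) :=
  {x ∈ X | ∀ q' ∈ Q, dot x q' - envelope X Q p q' ≤ dot x q - envelope X Q p q}

/-- A feasible price schedule: bounded below, with the zero bundle priced at zero. -/
def Feasible (Q : Set (Fin N → ℝ)) (p : (Fin N → ℝ) → ℝ) : Prop :=
  BddBelow (p '' Q) ∧ p 0 = 0

/-- The seller's revenue `∫_X u_p dμ`. -/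
def TR (xl xu : ℝ) (f : (Fin N → ℝ) → ℝ) (Q : Set (Fin N → ℝ))
    (p : (Fin N → ℝ) → ℝ) : ℝ :=
  (∑ n, (xu - xl)⁻¹ *
    (xu * ∫ y in box xl xu,
            indirect Q p (Function.update y n xu) * f (Function.update y n xu)
     - xl * ∫ y in box xl xu,
            indirect Q p (Function.update y n xl) * f (Function.update y n xl)))
  - ∫ x in box xl xu, indirect Q p x * phi f x

/-- A price schedule is optimal if it is feasible and maximizes `∫_X u_p dμ` among
feasible price schedules. -/
def Optimal (xl xu : ℝ) (f : (Fin N → ℝ) → ℝ) (Q : Set (Fin N → ℝ))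
    (p : (Fin N → ℝ) → ℝ) : Prop :=
  Feasible Q p ∧ ∀ p', Feasible Q p' → TR xl xu f Q p' ≤ TR xl xu f Q p

/-- The maintained assumptions on the type density `f` on `X = [x̲,x̄]^N`. -/
def DensityHyp (xl xu : ℝ) (f : (Fin N → ℝ) → ℝ) : Prop :=
  (∀ x, 0 ≤ f x) ∧ (∫ x in box xl xu, f x = 1) ∧
  ContinuousOn f (box xl xu) ∧ ContDiffOn ℝ 1 f (interior (box xl xu)) ∧
  (∀ x ∈ frontier (box xl xu), 0 < f x) ∧
  (∃ M : ℝ, ∀ x ∈ interior (box xl xu), |phi f x| ≤ M)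

/-- The maintained assumptions on the allocation space `𝒬`. -/
def QHyp (Q : Set (Fin N → ℝ)) : Prop :=
  Convex ℝ Q ∧ IsCompact Q ∧ (∀ q ∈ Q, ∀ n, 0 ≤ q n) ∧
  (interior Q).Nonempty ∧ (0 : Fin N → ℝ) ∈ Q

/-- The measure with density `f` (the buyers' type distribution). -/
def muF (f : (Fin N → ℝ) → ℝ) : Measure (Fin N → ℝ) :=
  volume.withDensity fun x => ENNReal.ofReal (f x)

end Stmt13

namespace Stmt13

variable {N : ℕ}

/-- The outward normal cone to `𝒬` at `q`. -/
def NC (Q : Set (Fin N → ℝ)) (q : Fin N → ℝ) : Set (Fin N → ℝ) :=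
  {w | ∀ q' ∈ Q, dot w (q' - q) ≤ 0}

/-!
Suppose `D(q)` is `f`-null. The gap `g x = u_p(x) - (x·q - p̄(q))` is nonnegative and Lipschitz,
vanishes somewhere in the box, and `{g ≤ 0} ⊆ D(q)`. Selling `q` at `p̄(q) - t` raises every
utility by `max 0 (t - g)`, so optimality of `p` forces the revenue gained on the upper faces, at
least `c₀ t / 2` times the area `S (t / 2)` of the trace of `{g < t / 2}` on those faces, to be at
most the interior loss `t M |{g < t, f > 0}|`; this volume tends to `0` because `D(q)` is null.

Moving along the normal cone can only decrease `g`, so every sublevel set `{g < t}` contains the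
rays, clipped to the box, from its points in a small box of directions around `v`. Slicing these
rays (Fubini) gives `S t ≳ τ ^ (N - 1)` for the exit time `τ` of any point of `{g < t}`, and
`|{g < t}| ≲ τ_max · S t`. Hence `S (t / 2) ≤ 2 ^ (-N) S t` as soon as `S t` is small, which is
incompatible with the bound `S t ≳ t ^ (N - 1)` obtained near a zero of `g`.
-/

open Filter Topology

section Utility

variable {X Q : Set (Fin N → ℝ)} {p : (Fin N → ℝ) → ℝ} {R : ℝ} {q : Fin N → ℝ}

lemma pos_of_norm_eq_one {v : Fin N → ℝ} (hv : ‖v‖ = 1) : 0 < N :=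
  Nat.pos_of_ne_zero fun h => by
    subst h; rw [Subsingleton.elim v 0, norm_zero] at hv; exact zero_ne_one hv

lemma exists_sum_abs_le (hQ : IsCompact Q) :
    ∃ R, ∀ q' ∈ Q, ∑ i, |q' i| ≤ R :=
  (hQ.bddAbove_image (f := fun q' => ∑ i, |q' i|) (by fun_prop)).imp
    fun _ hR q' hq' => hR ⟨q', hq', rfl⟩

lemma dot_sub_left (x y z : Fin N → ℝ) : dot (x - y) z = dot x z - dot y z := by
  simp only [dot, Pi.sub_apply, sub_mul, Finset.sum_sub_distrib]

lemma dot_sub_right (x y z : Fin N → ℝ) : dot x (y - z) = dot x y - dot x z := by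
  simp only [dot, Pi.sub_apply, mul_sub, Finset.sum_sub_distrib]

lemma dot_smul_left (s : ℝ) (x z : Fin N → ℝ) : dot (s • x) z = s * dot x z := by
  simp only [dot, Pi.smul_apply, smul_eq_mul, Finset.mul_sum, mul_assoc]

lemma abs_dot_le (x z : Fin N → ℝ) : |dot x z| ≤ ‖x‖ * ∑ i, |z i| := by
  rw [Finset.mul_sum]
  refine (Finset.abs_sum_le_sum_abs _ _).trans (Finset.sum_le_sum fun i _ => ?_)
  rw [abs_mul]
  exact mul_le_mul_of_nonneg_right (norm_le_pi_norm x i) (abs_nonneg _)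

lemma lipschitzWith_dot_left (z : Fin N → ℝ) :
    LipschitzWith (∑ i, |z i|).toNNReal fun x => dot x z := by
  refine LipschitzWith.of_le_add_mul' _ fun x y => ?_
  have := (le_abs_self _).trans (abs_dot_le (x - y) z)
  rw [dot_sub_left, ← dist_eq_norm] at this
  linarith

lemma le_indirect (hR : ∀ q' ∈ Q, ∑ i, |q' i| ≤ R) (hb : BddBelow (p '' Q))
    {q' : Fin N → ℝ} (hq' : q' ∈ Q) (x : Fin N → ℝ) : dot x q' - p q' ≤ indirect Q p x := by
  obtain ⟨B, hB⟩ := hb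
  refine le_csSup ⟨‖x‖ * R - B, ?_⟩ ⟨q', hq', rfl⟩
  rintro _ ⟨q'', hq'', rfl⟩
  have hdot := (le_abs_self _).trans (abs_dot_le x q'')
  have := mul_le_mul_of_nonneg_left (hR q'' hq'') (norm_nonneg x)
  linarith [hB ⟨q'', hq'', rfl⟩]

lemma indirect_le (hQ : Q.Nonempty) {x : Fin N → ℝ} {c : ℝ}
    (h : ∀ q' ∈ Q, dot x q' - p q' ≤ c) : indirect Q p x ≤ c :=
  csSup_le (hQ.image _) (by rintro _ ⟨q', hq', rfl⟩; exact h q' hq')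

lemma lipschitzWith_indirect (hR : ∀ q' ∈ Q, ∑ i, |q' i| ≤ R) (hb : BddBelow (p '' Q))
    (hQ : Q.Nonempty) : LipschitzWith R.toNNReal (indirect Q p) := by
  refine LipschitzWith.of_le_add_mul' R fun x y => indirect_le hQ fun q' hq' => ?_
  have hxy := (le_abs_self _).trans (abs_dot_le (x - y) q')
  have := mul_le_mul_of_nonneg_left (hR q' hq') (norm_nonneg (x - y))
  rw [dot_sub_left] at hxy
  rw [dist_eq_norm]
  linarith [le_indirect hR hb hq' y]

lemma le_envelope (hR : ∀ q' ∈ Q, ∑ i, |q' i| ≤ R) (hb : BddBelow (p '' Q))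
    {q' x : Fin N → ℝ} (hq' : q' ∈ Q) (hx : x ∈ X) :
    dot x q' - indirect Q p x ≤ envelope X Q p q' := by
  refine le_csSup ⟨p q', ?_⟩ ⟨x, hx, rfl⟩
  rintro _ ⟨z, -, rfl⟩
  linarith [le_indirect hR hb hq' z]

lemma envelope_le (hR : ∀ q' ∈ Q, ∑ i, |q' i| ≤ R) (hb : BddBelow (p '' Q))
    (hX : X.Nonempty) {q' : Fin N → ℝ} (hq' : q' ∈ Q) : envelope X Q p q' ≤ p q' := by
  refine csSup_le (hX.image _) ?_
  rintro _ ⟨z, -, rfl⟩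
  linarith [le_indirect hR hb hq' z]

lemma exists_envelope_eq (hR : ∀ q' ∈ Q, ∑ i, |q' i| ≤ R) (hb : BddBelow (p '' Q))
    (hQ : Q.Nonempty) (hXc : IsCompact X) (hX : X.Nonempty) (q : Fin N → ℝ) :
    ∃ x ∈ X, envelope X Q p q = dot x q - indirect Q p x := by
  obtain ⟨x, hx, hmax⟩ := hXc.exists_isMaxOn hX ((lipschitzWith_dot_left q).continuous.sub
    (lipschitzWith_indirect hR hb hQ).continuous).continuousOn
  exact ⟨x, hx, IsGreatest.csSup_eq ⟨⟨x, hx, rfl⟩, by rintro _ ⟨z, hz, rfl⟩; exact hmax hz⟩⟩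

/-- `u_p(x) - (x·q - p̄(q))`: the surplus of type `x` over buying `q` at the convexified price. -/
def gap (X Q : Set (Fin N → ℝ)) (p : (Fin N → ℝ) → ℝ) (q x : Fin N → ℝ) : ℝ :=
  indirect Q p x - (dot x q - envelope X Q p q)

lemma gap_nonneg (hR : ∀ q' ∈ Q, ∑ i, |q' i| ≤ R) (hb : BddBelow (p '' Q)) (hq : q ∈ Q)
    {x : Fin N → ℝ} (hx : x ∈ X) : 0 ≤ gap X Q p q x := by
  have := le_envelope hR hb hq hx
  unfold gap; linarith

lemma lipschitzWith_gap (hR : ∀ q' ∈ Q, ∑ i, |q' i| ≤ R) (hb : BddBelow (p '' Q))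
    (hQ : Q.Nonempty) : ∃ L, LipschitzWith L (gap X Q p q) :=
  ⟨_, (lipschitzWith_indirect hR hb hQ).sub
    ((lipschitzWith_dot_left q).sub (LipschitzWith.const (envelope X Q p q)))⟩

lemma gap_le_of_sub_mem_NC (hR : ∀ q' ∈ Q, ∑ i, |q' i| ≤ R) (hb : BddBelow (p '' Q))
    (hq : q ∈ Q) {x y : Fin N → ℝ} (hx : x ∈ X) (hyx : y - x ∈ NC Q q) :
    gap X Q p q y ≤ gap X Q p q x := by
  have key : indirect Q p y ≤ indirect Q p x + dot (y - x) q := by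
    refine indirect_le ⟨q, hq⟩ fun q' hq' => ?_
    have hcone := hyx q' hq'
    rw [dot_sub_right, dot_sub_left, dot_sub_left] at hcone
    rw [dot_sub_left]
    linarith [le_envelope hR hb hq' hx, envelope_le hR hb ⟨x, hx⟩ hq']
  rw [dot_sub_left] at key
  unfold gap; linarith

lemma setOf_gap_nonpos_subset_demandSet (hR : ∀ q' ∈ Q, ∑ i, |q' i| ≤ R)
    (hb : BddBelow (p '' Q)) : {x ∈ X | gap X Q p q x ≤ 0} ⊆ demandSet X Q p q := by
  rintro x ⟨hx, hgap⟩
  refine ⟨hx, fun q' hq' => ?_⟩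
  have := le_envelope hR hb hq' hx
  unfold gap at hgap; linarith

end Utility

section PriceCut

variable {X Q : Set (Fin N → ℝ)} {p : (Fin N → ℝ) → ℝ} {R : ℝ} {q : Fin N → ℝ}

lemma bddBelow_update (hb : BddBelow (p '' Q)) (c : ℝ) :
    BddBelow (Function.update p q c '' Q) := by
  obtain ⟨B, hB⟩ := hb
  refine ⟨min B c, ?_⟩
  rintro _ ⟨q', hq', rfl⟩
  rcases eq_or_ne q' q with rfl | hne
  · simp
  · simpa [Function.update_of_ne hne] using Or.inl (hB ⟨q', hq', rfl⟩)

lemma feasible_update (hp : Feasible Q p) (hq0 : q ≠ 0) (c : ℝ) :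
    Feasible Q (Function.update p q c) :=
  ⟨bddBelow_update hp.1 c, by rw [Function.update_of_ne hq0.symm, hp.2]⟩

lemma indirect_update (hR : ∀ q' ∈ Q, ∑ i, |q' i| ≤ R) (hb : BddBelow (p '' Q)) (hq : q ∈ Q)
    {c : ℝ} (hc : c ≤ p q) (x : Fin N → ℝ) :
    indirect Q (Function.update p q c) x = max (indirect Q p x) (dot x q - c) := by
  have hb' := bddBelow_update (q := q) hb c
  refine le_antisymm (indirect_le ⟨q, hq⟩ fun q' hq' => ?_) (max_le ?_ ?_)
  · rcases eq_or_ne q' q with rfl | hne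
    · simp
    · rw [Function.update_of_ne hne]
      exact le_max_of_le_left (le_indirect hR hb hq' x)
  · refine indirect_le ⟨q, hq⟩ fun q' hq' => ?_
    have h := le_indirect hR hb' hq' x
    rcases eq_or_ne q' q with rfl | hne
    · simp only [Function.update_self] at h; linarith
    · rwa [Function.update_of_ne hne] at h
  · simpa using le_indirect hR hb' hq x

lemma indirect_update_envelope_sub (hR : ∀ q' ∈ Q, ∑ i, |q' i| ≤ R) (hb : BddBelow (p '' Q))
    (hq : q ∈ Q) (hX : X.Nonempty) {t : ℝ} (ht : 0 ≤ t) (x : Fin N → ℝ) :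
    indirect Q (Function.update p q (envelope X Q p q - t)) x =
      indirect Q p x + max 0 (t - gap X Q p q x) := by
  have hc : envelope X Q p q - t ≤ p q := by linarith [envelope_le hR hb hX hq]
  rw [indirect_update hR hb hq hc, ← max_add_add_left, add_zero, gap]
  ring_nf

end PriceCut

section Box

lemma measurableSet_box : MeasurableSet (box 0 1 : Set (Fin N → ℝ)) := measurableSet_Icc

lemma isCompact_box : IsCompact (box 0 1 : Set (Fin N → ℝ)) := isCompact_Icc

lemma box_nonempty : (box 0 1 : Set (Fin N → ℝ)).Nonempty :=
  nonempty_Icc.2 fun _ => zero_le_one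

lemma interior_box : interior (box 0 1 : Set (Fin N → ℝ)) = univ.pi fun _ => Ioo 0 1 := by
  rw [box, ← pi_univ_Icc, interior_pi_set finite_univ]
  simp only [interior_Icc]

lemma volume_box : volume (box 0 1 : Set (Fin N → ℝ)) = 1 := by
  simp [box, Real.volume_Icc_pi]

instance : IsFiniteMeasure (volume.restrict (box 0 1 : Set (Fin N → ℝ))) :=
  isFiniteMeasure_restrict.2 (by simp [volume_box])

lemma ae_restrict_box_mem_interior :
    ∀ᵐ x ∂volume.restrict (box 0 1 : Set (Fin N → ℝ)), x ∈ interior (box 0 1) := by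
  rw [ae_restrict_iff' measurableSet_box]
  refine measure_mono_null (fun x hx => ?_) ((convex_Icc (0 : Fin N → ℝ) 1).addHaar_frontier volume)
  exact ⟨subset_closure (Classical.not_imp.1 hx).1, (Classical.not_imp.1 hx).2⟩

lemma update_mem_box {y : Fin N → ℝ} (hy : y ∈ box 0 1) (n : Fin N) {c : ℝ}
    (hc : c ∈ Icc (0 : ℝ) 1) : Function.update y n c ∈ box 0 1 := by
  constructor <;> intro m <;> rcases eq_or_ne m n with rfl | hmn <;>
    simp_all [Function.update_of_ne, hy.1 m, hy.2 m]

lemma update_one_mem_frontier_box {y : Fin N → ℝ} (hy : y ∈ box 0 1) (n : Fin N) :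
    Function.update y n 1 ∈ frontier (box 0 1) := by
  rw [isCompact_box.isClosed.frontier_eq, interior_box]
  exact ⟨update_mem_box hy n ⟨zero_le_one, le_rfl⟩, fun h => by simpa using h n (mem_univ n)⟩

end Box

section Revenue

variable {f : (Fin N → ℝ) → ℝ} {M : ℝ} {Q : Set (Fin N → ℝ)}

lemma exists_pos_le_on_upper_faces (hfc : ContinuousOn f (box 0 1))
    (hfb : ∀ x ∈ frontier (box 0 1), 0 < f x) :
    ∃ c₀ > 0, ∀ y ∈ box 0 1, ∀ n, c₀ ≤ f (Function.update y n 1) := by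
  have hfr : IsCompact (frontier (box 0 1 : Set (Fin N → ℝ))) :=
    isCompact_box.of_isClosed_subset isClosed_frontier isCompact_box.isClosed.frontier_subset
  obtain ⟨c₀, hc₀, hle⟩ :=
    hfr.exists_forall_le' (hfc.mono isCompact_box.isClosed.frontier_subset) hfb
  exact ⟨c₀, hc₀, fun y hy n => hle _ (update_one_mem_frontier_box hy n)⟩

lemma nonneg_of_abs_phi_le (hφM : ∀ x ∈ interior (box 0 1), |phi f x| ≤ M) : 0 ≤ M := by
  have hx : (fun _ => 1 / 2 : Fin N → ℝ) ∈ interior (box 0 1) := by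
    rw [interior_box]; exact fun _ _ => ⟨by norm_num, by norm_num⟩
  exact (abs_nonneg _).trans (hφM _ hx)

lemma phi_eq_zero (hf0 : ∀ x, 0 ≤ f x) {x : Fin N → ℝ} (hfx : f x = 0) : phi f x = 0 := by
  have hmin : IsLocalMin f x := Filter.Eventually.of_forall fun z => hfx ▸ hf0 z
  simp [phi, hmin.fderiv_eq_zero, hfx]

lemma integrableOn_mul_phi (hfc : ContinuousOn f (box 0 1))
    (hφM : ∀ x ∈ interior (box 0 1), |phi f x| ≤ M) {g : (Fin N → ℝ) → ℝ}
    (hg : Continuous g) : IntegrableOn (fun x => g x * phi f x) (box 0 1) := by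
  have hφ : IntegrableOn (phi f) (box 0 1) := by
    refine ⟨?_, HasFiniteIntegral.of_bounded (C := M) ?_⟩
    · refine (Measurable.aemeasurable ?_).add ((hfc.aemeasurable measurableSet_box).const_mul _)
        |>.aestronglyMeasurable
      exact Finset.measurable_sum _ fun n _ =>
        (measurable_pi_apply n).mul (measurable_fderiv_apply_const ℝ f _)
    · filter_upwards [ae_restrict_box_mem_interior] with x hx
      simpa [Real.norm_eq_abs] using hφM x hx
  obtain ⟨C, hC⟩ := isCompact_box.exists_bound_of_continuousOn hg.continuousOn
  exact hφ.bdd_mul hg.aestronglyMeasurable.restrict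
    ((ae_restrict_iff' measurableSet_box).2 (Filter.Eventually.of_forall hC))

lemma integrableOn_face (hfc : ContinuousOn f (box 0 1)) {g : (Fin N → ℝ) → ℝ}
    (hg : Continuous g) (n : Fin N) :
    IntegrableOn (fun y => g (Function.update y n 1) * f (Function.update y n 1)) (box 0 1) := by
  have hupd : Continuous fun y : Fin N → ℝ => Function.update y n 1 :=
    continuous_id.update n continuous_const
  refine ContinuousOn.integrableOn_compact isCompact_box ((hg.comp hupd).continuousOn.mul ?_)
  exact hfc.comp hupd.continuousOn fun y hy => update_mem_box hy n ⟨zero_le_one, le_rfl⟩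

lemma TR_zero_one (p : (Fin N → ℝ) → ℝ) : TR 0 1 f Q p =
    (∑ n, ∫ y in box 0 1, indirect Q p (Function.update y n 1) * f (Function.update y n 1))
      - ∫ x in box 0 1, indirect Q p x * phi f x := by
  simp [TR]

lemma TR_eq_add (hfc : ContinuousOn f (box 0 1))
    (hφM : ∀ x ∈ interior (box 0 1), |phi f x| ≤ M) {p p' h : (Fin N → ℝ) → ℝ}
    (hu : Continuous (indirect Q p)) (hh : Continuous h)
    (hp' : ∀ x, indirect Q p' x = indirect Q p x + h x) :
    TR 0 1 f Q p' = TR 0 1 f Q p +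
      ((∑ n, ∫ y in box 0 1, h (Function.update y n 1) * f (Function.update y n 1))
        - ∫ x in box 0 1, h x * phi f x) := by
  simp_rw [TR_zero_one, hp', add_mul]
  rw [integral_add (integrableOn_mul_phi hfc hφM hu) (integrableOn_mul_phi hfc hφM hh)]
  simp_rw [integral_add (integrableOn_face hfc hu _) (integrableOn_face hfc hh _),
    Finset.sum_add_distrib]
  ring

end Revenue

section GainLoss

variable {f : (Fin N → ℝ) → ℝ} {M R : ℝ} {Q : Set (Fin N → ℝ)} {p : (Fin N → ℝ) → ℝ}
  {q : Fin N → ℝ}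

/-- The area of the trace of `B` on the upper face `x n = 1`, computed as the volume of the
cylinder over that trace in the unit box (the `n`-th coordinate of `y` is a dummy, as in `TR`). -/
def faceMeasure (n : Fin N) (B : Set (Fin N → ℝ)) : ENNReal :=
  volume {y ∈ box 0 1 | Function.update y n 1 ∈ B}

def upperFaceArea (g : (Fin N → ℝ) → ℝ) (t : ℝ) : ℝ :=
  ∑ m, (faceMeasure m {x ∈ box 0 1 | g x < t}).toReal

lemma faceMeasure_ne_top (m : Fin N) (B : Set (Fin N → ℝ)) : faceMeasure m B ≠ ⊤ :=
  measure_ne_top_of_subset (sep_subset _ _) (by simp [volume_box])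

lemma measurableSet_sublevel {g : (Fin N → ℝ) → ℝ} (hg : Continuous g) (t : ℝ) :
    MeasurableSet {x ∈ box 0 1 | g x < t} :=
  measurableSet_box.inter (hg.measurable measurableSet_Iio)

lemma measurableSet_sublevel_pos (hfc : ContinuousOn f (box 0 1)) {g : (Fin N → ℝ) → ℝ}
    (hg : Continuous g) (t : ℝ) : MeasurableSet {x ∈ box 0 1 | g x < t ∧ 0 < f x} := by
  have hzero : IsClosed (box 0 1 ∩ f ⁻¹' Iic 0) :=
    hfc.preimage_isClosed_of_isClosed isCompact_box.isClosed isClosed_Iic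
  convert (measurableSet_sublevel hg t).diff hzero.measurableSet using 1
  ext x
  exact ⟨fun ⟨hx, hgx, hfx⟩ => ⟨⟨hx, hgx⟩, fun h => not_le.2 hfx h.2⟩,
    fun ⟨⟨hx, hgx⟩, h⟩ => ⟨hx, hgx, not_le.1 fun h' => h ⟨hx, h'⟩⟩⟩

lemma mul_faceMeasure_le_integral (hf0 : ∀ x, 0 ≤ f x) (hfc : ContinuousOn f (box 0 1))
    {c₀ : ℝ} (hc₀ : 0 ≤ c₀) (hc₀f : ∀ y ∈ box 0 1, ∀ n, c₀ ≤ f (Function.update y n 1))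
    {g : (Fin N → ℝ) → ℝ} (hg : Continuous g) (t : ℝ) (n : Fin N) :
    t / 2 * c₀ * (faceMeasure n {x ∈ box 0 1 | g x < t / 2}).toReal ≤
      ∫ y in box 0 1, max 0 (t - g (Function.update y n 1)) * f (Function.update y n 1) := by
  set S := {y ∈ box 0 1 | Function.update y n 1 ∈ {x ∈ box 0 1 | g x < t / 2}}
  have hS : MeasurableSet S := measurableSet_box.inter
    ((continuous_id.update n continuous_const).measurable (measurableSet_sublevel hg _))
  have hh : Continuous fun x => max 0 (t - g x) := by fun_prop
  have hmono : ∫ y in box 0 1, S.indicator (fun _ => t / 2 * c₀) y ≤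
      ∫ y in box 0 1, max 0 (t - g (Function.update y n 1)) * f (Function.update y n 1) := by
    refine setIntegral_mono_on ((integrable_const _).indicator hS)
      (integrableOn_face hfc hh n) measurableSet_box fun y hy => ?_
    by_cases hyS : y ∈ S
    · rw [indicator_of_mem hyS]
      exact mul_le_mul (le_max_of_le_right (by linarith [hyS.2.2])) (hc₀f y hy n) hc₀
        (le_max_left _ _)
    · rw [indicator_of_notMem hyS]
      exact mul_nonneg (le_max_left _ _) (hf0 _)
  rwa [integral_indicator_const _ hS, measureReal_restrict_apply hS,
    inter_eq_self_of_subset_left (sep_subset _ _), smul_eq_mul, mul_comm] at hmono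

lemma integral_mul_phi_le (hf0 : ∀ x, 0 ≤ f x) (hfc : ContinuousOn f (box 0 1))
    (hφM : ∀ x ∈ interior (box 0 1), |phi f x| ≤ M) {g : (Fin N → ℝ) → ℝ} (hg : Continuous g)
    (hg0 : ∀ x ∈ box 0 1, 0 ≤ g x) {t : ℝ} (ht : 0 ≤ t) :
    ∫ x in box 0 1, max 0 (t - g x) * phi f x ≤
      t * M * (volume {x ∈ box 0 1 | g x < t ∧ 0 < f x}).toReal := by
  set P := {x ∈ box 0 1 | g x < t ∧ 0 < f x}
  have hP := measurableSet_sublevel_pos hfc hg t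
  have hM := nonneg_of_abs_phi_le hφM
  have hh : Continuous fun x => max 0 (t - g x) := by fun_prop
  have hmono : ∫ x in box 0 1, max 0 (t - g x) * phi f x ≤
      ∫ x in box 0 1, P.indicator (fun _ => t * M) x := by
    refine integral_mono_ae (integrableOn_mul_phi hfc hφM hh)
      ((integrable_const _).indicator hP) ?_
    filter_upwards [ae_restrict_box_mem_interior] with x hx
    have hxbox : x ∈ box 0 1 := interior_subset hx
    by_cases hxP : x ∈ P
    · rw [indicator_of_mem hxP]
      have hgain : max 0 (t - g x) ≤ t := max_le ht (by linarith [hg0 x hxbox])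
      calc max 0 (t - g x) * phi f x ≤ max 0 (t - g x) * M :=
            mul_le_mul_of_nonneg_left ((le_abs_self _).trans (hφM x hx)) (le_max_left _ _)
        _ ≤ t * M := mul_le_mul_of_nonneg_right hgain hM
    · rw [indicator_of_notMem hxP]
      simp only [P, mem_ofPred_eq, not_and, not_lt] at hxP
      rcases le_or_gt t (g x) with hgt | hgt
      · simp [max_eq_left (sub_nonpos.2 hgt)]
      · simp [phi_eq_zero hf0 (le_antisymm (hxP hxbox hgt) (hf0 x))]
  rwa [integral_indicator_const _ hP, measureReal_restrict_apply hP,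
    inter_eq_self_of_subset_left (sep_subset _ _), smul_eq_mul, mul_comm] at hmono

lemma upperFaceArea_half_le (hf0 : ∀ x, 0 ≤ f x) (hfc : ContinuousOn f (box 0 1))
    (hφM : ∀ x ∈ interior (box 0 1), |phi f x| ≤ M)
    {c₀ : ℝ} (hc₀ : 0 < c₀) (hc₀f : ∀ y ∈ box 0 1, ∀ n, c₀ ≤ f (Function.update y n 1))
    {g : (Fin N → ℝ) → ℝ} (hg : Continuous g) (hg0 : ∀ x ∈ box 0 1, 0 ≤ g x)
    {t : ℝ} (ht : 0 < t)
    (hopt : (∑ n, ∫ y in box 0 1, max 0 (t - g (Function.update y n 1)) *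
        f (Function.update y n 1)) ≤ ∫ x in box 0 1, max 0 (t - g x) * phi f x) :
    upperFaceArea g (t / 2) ≤ 2 * M / c₀ * (volume {x ∈ box 0 1 | g x < t ∧ 0 < f x}).toReal := by
  have hgain : t / 2 * (c₀ * ∑ n, (faceMeasure n {x ∈ box 0 1 | g x < t / 2}).toReal) ≤
      ∑ n, ∫ y in box 0 1, max 0 (t - g (Function.update y n 1)) * f (Function.update y n 1) := by
    rw [Finset.mul_sum, Finset.mul_sum]
    exact Finset.sum_le_sum fun n _ => by
      rw [← mul_assoc]; exact mul_faceMeasure_le_integral hf0 hfc hc₀.le hc₀f hg t n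
  have hloss := integral_mul_phi_le hf0 hfc hφM hg hg0 ht.le
  rw [upperFaceArea, div_mul_eq_mul_div, le_div_iff₀ hc₀]
  nlinarith

/-- Optimality of `p` against the schedule that sells `q` at `p̄(q) - t` instead. -/
lemma faceGain_le_interiorLoss (hfc : ContinuousOn f (box 0 1))
    (hφM : ∀ x ∈ interior (box 0 1), |phi f x| ≤ M) (hR : ∀ q' ∈ Q, ∑ i, |q' i| ≤ R)
    (hopt : Optimal 0 1 f Q p) (hq : q ∈ Q) (hq0 : q ≠ 0) {t : ℝ} (ht : 0 ≤ t) :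
    (∑ n, ∫ y in box 0 1, max 0 (t - gap (box 0 1) Q p q (Function.update y n 1)) *
        f (Function.update y n 1)) ≤
      ∫ x in box 0 1, max 0 (t - gap (box 0 1) Q p q x) * phi f x := by
  have hb := hopt.1.1
  obtain ⟨L, hL⟩ := lipschitzWith_gap (X := box 0 1) (q := q) hR hb ⟨q, hq⟩
  have hcut := hopt.2 _ (feasible_update hopt.1 hq0 (envelope (box 0 1) Q p q - t))
  rw [TR_eq_add (h := fun x => max 0 (t - gap (box 0 1) Q p q x)) hfc hφM
    (lipschitzWith_indirect hR hb ⟨q, hq⟩).continuous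
    (continuous_const.max (continuous_const.sub hL.continuous))
    (indirect_update_envelope_sub hR hb hq box_nonempty ht)] at hcut
  linarith

end GainLoss

section Vanishing

variable {f : (Fin N → ℝ) → ℝ}

lemma volume_pos_eq_zero_of_muF_eq_zero (hfc : ContinuousOn f (box 0 1))
    {s : Set (Fin N → ℝ)} (hs : s ⊆ box 0 1) (h : muF f s = 0) :
    volume {x ∈ s | 0 < f x} = 0 := by
  have hF : AEMeasurable (fun x => ENNReal.ofReal (f x)) (volume.restrict (box 0 1)) :=
    (hfc.aemeasurable measurableSet_box).ennreal_ofReal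
  rw [muF, ← Measure.restrict_eq_self _ hs, restrict_withDensity measurableSet_box,
    withDensity_apply_eq_zero' hF, Measure.restrict_eq_self _ (inter_subset_right.trans hs)] at h
  refine measure_mono_null (fun x hx => ?_) h
  exact ⟨by simpa using hx.2, hx.1⟩

lemma tendsto_volume_sublevel_pos (hfc : ContinuousOn f (box 0 1)) {g : (Fin N → ℝ) → ℝ}
    (hg : Continuous g) (h0 : muF f {x ∈ box 0 1 | g x ≤ 0} = 0) :
    Tendsto (fun t => (volume {x ∈ box 0 1 | g x < t ∧ 0 < f x}).toReal) (𝓝[>] 0) (𝓝 0) := by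
  have hlim := tendsto_measure_biInter_gt (μ := volume) (a := (0 : ℝ))
    (s := fun t => {x ∈ box 0 1 | g x < t ∧ 0 < f x})
    (fun t _ => (measurableSet_sublevel_pos hfc hg t).nullMeasurableSet)
    (fun _ _ _ hst _ ⟨hx, hgx, hfx⟩ => ⟨hx, hgx.trans_le hst, hfx⟩)
    ⟨1, one_pos, measure_ne_top_of_subset (fun _ hx => hx.1) (by simp [volume_box])⟩
  have hInter : (⋂ t > (0 : ℝ), {x ∈ box 0 1 | g x < t ∧ 0 < f x}) =
      {x ∈ {x ∈ box 0 1 | g x ≤ 0} | 0 < f x} := by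
    ext x
    simp only [mem_iInter, mem_ofPred_eq]
    refine ⟨fun h => ⟨⟨(h 1 one_pos).1, le_of_forall_pos_lt_add fun ε hε => ?_⟩,
      (h 1 one_pos).2.2⟩, fun ⟨⟨hx, hgx⟩, hfx⟩ t ht => ⟨hx, hgx.trans_lt ht, hfx⟩⟩
    simpa using (h ε hε).2.1
  rw [hInter, volume_pos_eq_zero_of_muF_eq_zero hfc (sep_subset _ _) h0] at hlim
  exact (ENNReal.tendsto_toReal ENNReal.zero_ne_top).comp hlim

end Vanishing

section Rays

open scoped Pointwise

variable {n : ℕ}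

def AbsorbsRays (A W : Set (Fin N → ℝ)) : Prop :=
  ∀ x ∈ A, ∀ w ∈ W, ∀ s : ℝ, 0 ≤ s → x + s • w ∈ box 0 1 → x + s • w ∈ A

/-- The time at which the ray `s ↦ x + s • w` (with `w > 0`) leaves the unit box. -/
def exitTime (w x : Fin (n + 1) → ℝ) : ℝ := ⨅ i, (1 - x i) / w i

lemma exitTime_le (w x : Fin (n + 1) → ℝ) (i : Fin (n + 1)) :
    exitTime w x ≤ (1 - x i) / w i :=
  ciInf_le (Finite.bddBelow_range _) i

lemma le_exitTime {w x : Fin (n + 1) → ℝ} {c : ℝ} (h : ∀ i, c ≤ (1 - x i) / w i) :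
    c ≤ exitTime w x :=
  le_ciInf h

lemma exists_exitTime_eq (w x : Fin (n + 1) → ℝ) : ∃ m, exitTime w x = (1 - x m) / w m :=
  (exists_eq_ciInf_of_finite (f := fun i => (1 - x i) / w i)).imp fun _ h => h.symm

lemma exitTime_nonneg {w x : Fin (n + 1) → ℝ} (hw : ∀ i, 0 < w i) (hx : x ∈ box 0 1) :
    0 ≤ exitTime w x :=
  le_exitTime fun i => div_nonneg (by linarith [hx.2 i]) (hw i).le

lemma add_smul_mem_box {w x : Fin (n + 1) → ℝ} (hw : ∀ i, 0 < w i) (hx : x ∈ box 0 1)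
    {s : ℝ} (hs : 0 ≤ s) (hsT : ∀ i, s ≤ (1 - x i) / w i) : x + s • w ∈ box 0 1 := by
  refine ⟨fun i => ?_, fun i => ?_⟩
  · have := mul_nonneg hs (hw i).le
    simp only [Pi.add_apply, Pi.smul_apply, smul_eq_mul]
    linarith [hx.1 i]
  · have := (le_div_iff₀ (hw i)).1 (hsT i)
    simp only [Pi.add_apply, Pi.smul_apply, smul_eq_mul]
    linarith

lemma faceMeasure_eq_volume_insertNth (m : Fin (n + 1)) {A : Set (Fin (n + 1) → ℝ)}
    (hA : A ⊆ box 0 1) : faceMeasure m A = volume {z : Fin n → ℝ | m.insertNth 1 z ∈ A} := by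
  set e := MeasurableEquiv.piFinSuccAbove (fun _ : Fin (n + 1) => ℝ) m
  have hset : {y ∈ box 0 1 | Function.update y m 1 ∈ A} =
      e ⁻¹' (Icc 0 1 ×ˢ {z | m.insertNth 1 z ∈ A}) := by
    ext y
    have he : e y = (y m, m.removeNth y) := rfl
    simp only [mem_preimage, mem_prod, mem_ofPred_eq, he]
    rw [Fin.insertNth_removeNth]
    refine ⟨fun ⟨hy, hyA⟩ => ⟨⟨hy.1 m, hy.2 m⟩, hyA⟩,
      fun ⟨hym, hyA⟩ => ⟨⟨fun i => ?_, fun i => ?_⟩, hyA⟩⟩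
    · rcases eq_or_ne i m with rfl | hi
      · exact hym.1
      · simpa [Function.update_of_ne hi] using (hA hyA).1 i
    · rcases eq_or_ne i m with rfl | hi
      · exact hym.2
      · simpa [Function.update_of_ne hi] using (hA hyA).2 i
  rw [faceMeasure, hset, (volume_preserving_piFinSuccAbove _ m).measure_preimage_equiv,
    Measure.volume_eq_prod, Measure.prod_prod, Real.volume_Icc]
  simp

lemma add_smul_eq_insertNth {w x : Fin (n + 1) → ℝ} (m : Fin (n + 1)) (hwm : w m ≠ 0) :
    x + ((1 - x m) / w m) • w =
      m.insertNth 1 (m.removeNth x + ((1 - x m) / w m) • m.removeNth w) := by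
  rw [Fin.eq_insertNth_iff]
  refine ⟨?_, rfl⟩
  simp only [Pi.add_apply, Pi.smul_apply, smul_eq_mul]
  field_simp
  ring

/-- The points whose ray along `w` reaches the face `x m = 1` inside `A` within time `T`
form a slab of width `T * w m` over the trace of `A` on that face, sheared along `w`. -/
lemma volume_slab_le {w : Fin (n + 1) → ℝ} (hw : ∀ i, 0 < w i) {A : Set (Fin (n + 1) → ℝ)}
    (hA : MeasurableSet A) (hAbox : A ⊆ box 0 1) (T : ℝ) (m : Fin (n + 1)) :
    volume {x | x m ∈ Icc (1 - T * w m) 1 ∧ x + ((1 - x m) / w m) • w ∈ A} ≤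
      ENNReal.ofReal (T * w m) * faceMeasure m A := by
  set e := MeasurableEquiv.piFinSuccAbove (fun _ : Fin (n + 1) => ℝ) m
  set F := {z : Fin n → ℝ | m.insertNth 1 z ∈ A}
  set shift : ℝ → Fin n → ℝ := fun c => ((1 - c) / w m) • m.removeNth w
  set S := {cz : ℝ × (Fin n → ℝ) | cz.1 ∈ Icc (1 - T * w m) 1 ∧ cz.2 + shift cz.1 ∈ F}
  have hS : MeasurableSet S := by
    refine (measurable_fst measurableSet_Icc).inter (hA.preimage ?_)
    exact e.symm.measurable.comp (measurable_const.prodMk (by fun_prop))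
  have hset : {x | x m ∈ Icc (1 - T * w m) 1 ∧ x + ((1 - x m) / w m) • w ∈ A} = e ⁻¹' S := by
    ext x
    have he : e x = (x m, m.removeNth x) := rfl
    simp only [mem_preimage, he, add_smul_eq_insertNth m (hw m).ne']
    rfl
  have hslice : ∀ c, volume (Prod.mk c ⁻¹' S) ≤ (Icc (1 - T * w m) 1).indicator
      (fun _ => volume F) c := by
    intro c
    by_cases hc : c ∈ Icc (1 - T * w m) 1
    · rw [indicator_of_mem hc]
      calc volume (Prod.mk c ⁻¹' S) ≤ volume ((· + shift c) ⁻¹' F) :=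
            measure_mono fun z hz => hz.2
        _ = volume F := measure_preimage_add_right _ _ _
    · rw [indicator_of_notMem hc]
      exact (measure_mono_null (fun z hz => hc hz.1) measure_empty).le
  rw [hset, (volume_preserving_piFinSuccAbove _ m).measure_preimage_equiv,
    Measure.volume_eq_prod, Measure.prod_apply hS, faceMeasure_eq_volume_insertNth m hAbox]
  calc ∫⁻ c, volume (Prod.mk c ⁻¹' S)
      ≤ ∫⁻ c, (Icc (1 - T * w m) 1).indicator (fun _ => volume F) c := lintegral_mono hslice
    _ = ENNReal.ofReal (T * w m) * volume F := by
      rw [lintegral_indicator measurableSet_Icc, setLIntegral_const, Real.volume_Icc, mul_comm]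
      ring_nf

lemma volume_le_sum_faceMeasure {w : Fin (n + 1) → ℝ} (hw : ∀ i, 0 < w i)
    {A : Set (Fin (n + 1) → ℝ)} (hA : MeasurableSet A) (hAbox : A ⊆ box 0 1)
    (habs : AbsorbsRays A {w}) {T : ℝ} (hexit : ∀ x ∈ A, exitTime w x ≤ T) :
    volume A ≤ ∑ m, ENNReal.ofReal (T * w m) * faceMeasure m A := by
  have hcover : A ⊆ ⋃ m, {x | x m ∈ Icc (1 - T * w m) 1 ∧ x + ((1 - x m) / w m) • w ∈ A} := by
    intro x hx
    obtain ⟨m, hm⟩ := exists_exitTime_eq w x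
    have hxbox := hAbox hx
    have hexit' : (1 - x m) / w m ≤ T := hm ▸ hexit x hx
    refine mem_iUnion.2 ⟨m, ⟨?_, hxbox.2 m⟩, ?_⟩
    · linarith [(div_le_iff₀ (hw m)).1 hexit']
    · rw [← hm]
      exact habs x hx w rfl _ (exitTime_nonneg hw hxbox)
        (add_smul_mem_box hw hxbox (exitTime_nonneg hw hxbox) (exitTime_le w x))
  calc volume A ≤ ∑ m, volume {x | x m ∈ Icc (1 - T * w m) 1 ∧
        x + ((1 - x m) / w m) • w ∈ A} :=
        (measure_mono hcover).trans (measure_iUnion_fintype_le _ _)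
    _ ≤ _ := Finset.sum_le_sum fun m _ => volume_slab_le hw hA hAbox T m

lemma AbsorbsRays.mono {A W W' : Set (Fin N → ℝ)} (h : AbsorbsRays A W)
    (hW : W' ⊆ W) : AbsorbsRays A W' :=
  fun x hx w hw => h x hx w (hW hw)

lemma exists_measure_le_card_mul {α ι : Type*} [MeasurableSpace α] [Fintype ι] [Nonempty ι]
    (μ : Measure α) {s : ι → Set α} {t : Set α} (h : t ⊆ ⋃ i, s i) :
    ∃ i, μ t ≤ Fintype.card ι * μ (s i) := by
  obtain ⟨i, hi⟩ := Finite.exists_max fun i => μ (s i)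
  refine ⟨i, (measure_mono h).trans ((measure_iUnion_fintype_le μ s).trans ?_)⟩
  calc ∑ j, μ (s j) ≤ ∑ _j : ι, μ (s i) := Finset.sum_le_sum fun j _ => hi j
    _ = Fintype.card ι * μ (s i) := by rw [Finset.sum_const, nsmul_eq_mul, Finset.card_univ]

lemma exists_lt_measure_slice {α β : Type*} [MeasurableSpace α] [MeasurableSpace β]
    {μ : Measure α} {ν : Measure β} [SFinite ν] {S : Set (α × β)} (hS : MeasurableSet S)
    {I : Set α} (hI : MeasurableSet I) (hSI : ∀ p ∈ S, p.1 ∈ I) {r : ENNReal}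
    (h : r * μ I < μ.prod ν S) : ∃ c ∈ I, r < ν (Prod.mk c ⁻¹' S) := by
  by_contra! hle
  refine h.not_ge ?_
  rw [Measure.prod_apply hS, ← setLIntegral_const, ← lintegral_indicator hI]
  refine lintegral_mono fun c => ?_
  by_cases hc : c ∈ I
  · rw [indicator_of_mem hc]; exact hle c hc
  · rw [indicator_of_notMem hc]
    exact (measure_mono_null (fun z hz => hc (hSI (c, z) hz)) measure_empty).le

/-- Rescaling the directions `w` with `w m = c` whose ray from `x` first leaves the box through
the face `x m = 1` by the common exit time `(1 - x m) / c` lands them in that face. -/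
lemma ofReal_pow_mul_volume_le {W A : Set (Fin (n + 1) → ℝ)} (hW : ∀ w ∈ W, ∀ i, 0 < w i)
    (habs : AbsorbsRays A W) {x : Fin (n + 1) → ℝ} (hx : x ∈ A) (hxbox : x ∈ box 0 1)
    (m : Fin (n + 1)) {c : ℝ} (hc : 0 < c) :
    ENNReal.ofReal (((1 - x m) / c) ^ n) * volume {z : Fin n → ℝ | m.insertNth c z ∈ W ∧
        ∀ i, (1 - x m) / c ≤ (1 - x i) / (m.insertNth c z : Fin (n + 1) → ℝ) i} ≤
      volume {z : Fin n → ℝ | m.insertNth 1 z ∈ A} := by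
  set T := (1 - x m) / c
  have hT : 0 ≤ T := div_nonneg (by linarith [hxbox.2 m]) hc.le
  set Z := {z : Fin n → ℝ | m.insertNth c z ∈ W ∧
    ∀ i, T ≤ (1 - x i) / (m.insertNth c z : Fin (n + 1) → ℝ) i}
  have himage : (fun z => m.removeNth x + T • z) '' Z ⊆ {z | m.insertNth 1 z ∈ A} := by
    rintro _ ⟨z, ⟨hzW, hzT⟩, rfl⟩
    have hy : m.insertNth 1 (m.removeNth x + T • z) = x + T • m.insertNth c z := by
      rw [Fin.insertNth_eq_iff]
      refine ⟨?_, by ext j; simp [Fin.removeNth]⟩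
      simp only [Pi.add_apply, Pi.smul_apply, Fin.insertNth_apply_same, smul_eq_mul, T]
      field_simp
      ring
    rw [mem_ofPred_eq, hy]
    exact habs x hx _ hzW T hT (add_smul_mem_box (hW _ hzW) hxbox hT hzT)
  have hvol :
      volume ((fun z => m.removeNth x + T • z) '' Z) = ENNReal.ofReal (T ^ n) * volume Z := by
    rw [show (fun z => m.removeNth x + T • z) '' Z = m.removeNth x +ᵥ T • Z by
      rw [← image_smul, ← image_vadd, image_image]; rfl]
    rw [measure_vadd, Measure.addHaar_smul, Module.finrank_fin_fun, abs_of_nonneg (pow_nonneg hT n)]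
  exact hvol ▸ measure_mono himage

lemma volume_pi_Ioo_add (a : Fin (n + 1) → ℝ) {δ : ℝ} (hδ : 0 ≤ δ) :
    volume (univ.pi fun i => Ioo (a i) (a i + δ)) = ENNReal.ofReal (δ ^ (n + 1)) := by
  simp [Real.volume_pi_Ioo, ENNReal.ofReal_pow hδ]

/-- Some face `m` is the first exit face of the rays from `x` for a `1 / (n + 1)` share of the
directions in `∏ (a i, a i + δ)`; by Fubini, one slice `w m = c` of these directions has area more
than `δ ^ n / (2 * (n + 1))`. -/
lemma exists_firstExit_slice_gt (a x : Fin (n + 1) → ℝ) {δ : ℝ} (hδ : 0 < δ) :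
    ∃ m, ∃ c ∈ Ioo (a m) (a m + δ), ENNReal.ofReal (δ ^ n / (2 * (n + 1))) <
      volume {z : Fin n → ℝ | m.insertNth c z ∈ univ.pi (fun i => Ioo (a i) (a i + δ)) ∧
        ∀ i, (1 - x m) / c ≤ (1 - x i) / (m.insertNth c z : Fin (n + 1) → ℝ) i} := by
  set U := univ.pi fun i => Ioo (a i) (a i + δ)
  set V : Fin (n + 1) → Set (Fin (n + 1) → ℝ) :=
    fun m => U ∩ ⋂ i, {w | (1 - x m) / w m ≤ (1 - x i) / w i}
  have hcover : U ⊆ ⋃ m, V m := fun w hw => by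
    obtain ⟨m, hm⟩ := exists_exitTime_eq w x
    exact mem_iUnion.2 ⟨m, hw, mem_iInter.2 fun i => (hm ▸ exitTime_le w x i : _ ≤ _)⟩
  obtain ⟨m, hm⟩ := exists_measure_le_card_mul volume hcover
  set e := MeasurableEquiv.piFinSuccAbove (fun _ : Fin (n + 1) => ℝ) m
  have he : ∀ p : ℝ × (Fin n → ℝ), e.symm p = m.insertNth p.1 p.2 := fun _ => rfl
  have hpres : MeasurePreserving e.symm (volume.prod volume) volume :=
    (volume_preserving_piFinSuccAbove _ m).symm
  have hS : MeasurableSet (e.symm ⁻¹' V m) :=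
    e.symm.measurable ((MeasurableSet.univ_pi fun _ => measurableSet_Ioo).inter
      (MeasurableSet.iInter fun i => measurableSet_le (by fun_prop) (by fun_prop)))
  have hSI : ∀ p ∈ e.symm ⁻¹' V m, p.1 ∈ Ioo (a m) (a m + δ) := fun p hp => by
    simpa [he] using hp.1 m (mem_univ m)
  have hlt : ENNReal.ofReal (δ ^ n / (2 * (n + 1))) * volume (Ioo (a m) (a m + δ)) <
      (volume.prod volume) (e.symm ⁻¹' V m) := by
    rw [hpres.measure_preimage_equiv,
      Real.volume_Ioo, add_sub_cancel_left, ← ENNReal.ofReal_mul (by positivity)]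
    by_contra! hle
    have h : volume U ≤ (Fintype.card (Fin (n + 1)) : ENNReal) *
        ENNReal.ofReal (δ ^ n / (2 * (n + 1)) * δ) := hm.trans (by gcongr)
    rw [volume_pi_Ioo_add a hδ.le, Fintype.card_fin, ← ENNReal.ofReal_natCast,
      ← ENNReal.ofReal_mul (by positivity), ENNReal.ofReal_le_ofReal_iff (by positivity)] at h
    have : ((n + 1 : ℕ) : ℝ) * (δ ^ n / (2 * (n + 1)) * δ) = δ ^ (n + 1) / 2 := by
      push_cast; field_simp; ring
    rw [this] at h
    linarith [pow_pos hδ (n + 1)]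
  obtain ⟨c, hc, hslice⟩ := exists_lt_measure_slice hS measurableSet_Ioo hSI hlt
  refine ⟨m, c, hc, hslice.trans_le (measure_mono fun z hz => ?_)⟩
  obtain ⟨hzU, hzi⟩ : m.insertNth c z ∈ V m := by simpa [he] using hz
  exact ⟨hzU, fun i => by simpa using mem_iInter.1 hzi i⟩

lemma exists_faceMeasure_ge {a : Fin (n + 1) → ℝ} {δ : ℝ} (ha : ∀ i, 0 < a i) (hδ : 0 < δ)
    {A : Set (Fin (n + 1) → ℝ)} (hAbox : A ⊆ box 0 1)
    (habs : AbsorbsRays A (Icc a fun i => a i + δ)) {x : Fin (n + 1) → ℝ} (hx : x ∈ A) :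
    ∃ m, ENNReal.ofReal (δ ^ n / (2 * (n + 1)) * exitTime (fun i => a i + δ) x ^ n) ≤
      faceMeasure m A := by
  have hxbox := hAbox hx
  obtain ⟨m, c, hc, hslice⟩ := exists_firstExit_slice_gt a x hδ
  have hc0 : 0 < c := (ha m).trans hc.1
  set U := univ.pi fun i => Ioo (a i) (a i + δ)
  have hUI : U ⊆ Icc a fun i => a i + δ :=
    fun w hw => ⟨fun i => (hw i (mem_univ i)).1.le, fun i => (hw i (mem_univ i)).2.le⟩
  have hface := ofReal_pow_mul_volume_le (W := U)
    (fun w hw i => (ha i).trans (hw i (mem_univ i)).1) (habs.mono hUI) hx hxbox m hc0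
  have hexit0 := exitTime_nonneg (w := fun i => a i + δ) (fun i => by linarith [ha i]) hxbox
  have hexit : exitTime (fun i => a i + δ) x ≤ (1 - x m) / c :=
    (exitTime_le _ x m).trans (div_le_div_of_nonneg_left (by linarith [hxbox.2 m]) hc0 hc.2.le)
  refine ⟨m, (le_trans ?_ hface).trans_eq (faceMeasure_eq_volume_insertNth m hAbox).symm⟩
  rw [mul_comm, ENNReal.ofReal_mul (pow_nonneg hexit0 n)]
  exact mul_le_mul' (ENNReal.ofReal_le_ofReal (pow_le_pow_left₀ hexit0 hexit n)) hslice.le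

end Rays

section NormalCone

variable {n : ℕ}

lemma exists_Icc_subset_of_mem_interior {C : Set (Fin N → ℝ)} {v : Fin N → ℝ}
    (hv : v ∈ interior C) : ∃ δ > 0, Icc (fun i => v i + δ) (fun i => v i + δ + δ) ⊆ C := by
  obtain ⟨ε, hε, hball⟩ := Metric.mem_nhds_iff.1 (mem_interior_iff_mem_nhds.1 hv)
  refine ⟨ε / 3, by positivity, fun w hw => hball ((dist_pi_lt_iff hε).2 fun i => ?_)⟩
  rw [Real.dist_eq, abs_lt]
  constructor <;> linarith [hw.1 i, hw.2 i]

lemma ne_zero_of_pos_mem_NC {Q : Set (Fin (n + 1) → ℝ)} (hQpos : ∀ q' ∈ Q, ∀ i, 0 ≤ q' i)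
    (hQint : (interior Q).Nonempty) {w q : Fin (n + 1) → ℝ} (hw : ∀ i, 0 < w i)
    (hwq : w ∈ NC Q q) : q ≠ 0 := by
  rintro rfl
  have hQ0 : Q ⊆ {0} := fun q' hq' => by
    have hsum := hwq q' hq'
    rw [sub_zero, dot] at hsum
    have hterms := (Finset.sum_eq_zero_iff_of_nonneg fun i _ =>
      mul_nonneg (hw i).le (hQpos q' hq' i)).1 (le_antisymm hsum (Finset.sum_nonneg fun i _ =>
        mul_nonneg (hw i).le (hQpos q' hq' i)))
    exact funext fun i => (mul_eq_zero.1 (hterms i (Finset.mem_univ i))).resolve_left (hw i).ne'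
  obtain ⟨q', hq'⟩ := hQint
  simpa using interior_mono hQ0 hq'

lemma absorbsRays_sublevel_gap {Q : Set (Fin N → ℝ)} {p : (Fin N → ℝ) → ℝ} {q : Fin N → ℝ}
    {R : ℝ} (hR : ∀ q' ∈ Q, ∑ i, |q' i| ≤ R) (hb : BddBelow (p '' Q)) (hq : q ∈ Q)
    {W : Set (Fin N → ℝ)} (hW : W ⊆ NC Q q) (t : ℝ) :
    AbsorbsRays {x ∈ box 0 1 | gap (box 0 1) Q p q x < t} W := by
  rintro x ⟨hx, hgx⟩ w hw s hs hy
  refine ⟨hy, (gap_le_of_sub_mem_NC hR hb hq hx fun q' hq' => ?_).trans_lt hgx⟩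
  rw [add_sub_cancel_left, dot_smul_left]
  exact mul_nonpos_of_nonneg_of_nonpos hs (hW hw q' hq')

end NormalCone

section Decay

lemma false_of_halving {n : ℕ} {S : ℝ → ℝ} {a t₀ : ℝ} (ha : 0 < a) (ht₀ : 0 < t₀)
    (hlow : ∀ s ∈ Ioc 0 t₀, a * s ^ n ≤ S s)
    (hhalf : ∀ s ∈ Ioc 0 t₀, S (s / 2) ≤ S s / 2 ^ (n + 1)) : False := by
  have hmem : ∀ k : ℕ, t₀ / 2 ^ k ∈ Ioc 0 t₀ :=
    fun k => ⟨by positivity, div_le_self ht₀.le (one_le_pow₀ one_le_two)⟩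
  have hiter : ∀ k : ℕ, S (t₀ / 2 ^ k) ≤ S t₀ / (2 ^ (n + 1)) ^ k := by
    intro k
    induction k with
    | zero => simp
    | succ k ih =>
      calc S (t₀ / 2 ^ (k + 1)) = S (t₀ / 2 ^ k / 2) := by rw [pow_succ, div_div]
        _ ≤ S (t₀ / 2 ^ k) / 2 ^ (n + 1) := hhalf _ (hmem k)
        _ ≤ S t₀ / (2 ^ (n + 1)) ^ k / 2 ^ (n + 1) := by gcongr
        _ = S t₀ / (2 ^ (n + 1)) ^ (k + 1) := by rw [div_div, ← pow_succ]
  obtain ⟨k, hk⟩ := pow_unbounded_of_one_lt (S t₀ / (a * t₀ ^ n)) one_lt_two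
  have hX : (0 : ℝ) < 2 ^ k := by positivity
  have hchain := (hlow _ (hmem k)).trans (hiter k)
  rw [div_pow, show ((2 : ℝ) ^ (n + 1)) ^ k = (2 ^ k) ^ n * 2 ^ k by ring,
    mul_div_assoc', div_le_div_iff₀ (by positivity) (by positivity)] at hchain
  rw [div_lt_iff₀ (by positivity)] at hk
  have : a * t₀ ^ n * 2 ^ k * (2 ^ k) ^ n ≤ S t₀ * (2 ^ k) ^ n := by linarith
  nlinarith [le_of_mul_le_mul_right this (by positivity)]

/-- Think of `S t` as the face area and `W t` as the volume of `{g < t}`: once `S` is small, the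
last two bounds give `S (t / 2) ≤ S t / 2 ^ (n + 1)`, a decay too fast for the first one. -/
lemma false_of_faceArea_bounds {n : ℕ} {S W : ℝ → ℝ} {a b K L t₁ : ℝ} (ha : 0 < a) (hb : 0 < b)
    (hK : 0 ≤ K) (ht₁ : 0 < t₁) (hlow : ∀ s ∈ Ioc 0 t₁, a * s ^ n ≤ S s)
    (hW : Tendsto W (𝓝[>] 0) (𝓝 0)) (hSW : ∀ t > 0, S (t / 2) ≤ K * W t)
    (hWS : ∀ t > 0, ∀ θ ≥ 0, S t < b * θ ^ n → W t ≤ L * θ * S t) : False := by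
  set θ : ℝ := 1 / (2 ^ (n + 1) * (K * |L| + 1))
  have hθ : 0 < θ := by positivity
  have hcoef : K * L * θ ≤ 1 / 2 ^ (n + 1) := by
    have h1 : (K * |L| + 1) * θ = 1 / 2 ^ (n + 1) := by
      simp only [θ]; field_simp
    nlinarith [mul_le_mul_of_nonneg_left (le_abs_self L) hK]
  obtain ⟨ε, hε, hεW⟩ : ∃ ε > 0, Ioo 0 ε ⊆ {t | K * W t < b * θ ^ n} := by
    refine mem_nhdsGT_iff_exists_Ioo_subset.1 ((hW.const_mul K).eventually (gt_mem_nhds ?_))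
    simpa using mul_pos hb (pow_pos hθ n)
  set t₀ := min t₁ (ε / 4)
  have ht₀ : 0 < t₀ := by positivity
  have hlow' : ∀ s ∈ Ioc 0 t₀, a * s ^ n ≤ S s :=
    fun s hs => hlow s ⟨hs.1, hs.2.trans (min_le_left _ _)⟩
  refine false_of_halving ha ht₀ hlow' fun s hs => ?_
  have hsmall : S s < b * θ ^ n := by
    have := hSW (2 * s) (by linarith [hs.1])
    rw [mul_div_cancel_left₀ s two_ne_zero] at this
    exact this.trans_lt (hεW ⟨by linarith [hs.1], by linarith [hs.2, min_le_right t₁ (ε / 4)]⟩)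
  have hS0 : 0 ≤ S s := (by have := hs.1; positivity : 0 ≤ a * s ^ n).trans (hlow' s hs)
  calc S (s / 2) ≤ K * W s := hSW s hs.1
    _ ≤ K * (L * θ * S s) := mul_le_mul_of_nonneg_left (hWS s hs.1 θ hθ.le hsmall) hK
    _ = K * L * θ * S s := by ring
    _ ≤ 1 / 2 ^ (n + 1) * S s := mul_le_mul_of_nonneg_right hcoef hS0
    _ = S s / 2 ^ (n + 1) := by ring

end Decay

section Sublevel

variable {n : ℕ}

lemma volume_le_of_sum_faceMeasure_lt {a : Fin (n + 1) → ℝ} {δ : ℝ} (ha : ∀ i, 0 < a i)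
    (hδ : 0 < δ) {A : Set (Fin (n + 1) → ℝ)} (hA : MeasurableSet A) (hAbox : A ⊆ box 0 1)
    (habs : AbsorbsRays A (Icc a fun i => a i + δ)) {θ : ℝ} (hθ : 0 ≤ θ)
    (h : ∑ m, faceMeasure m A < ENNReal.ofReal (δ ^ n / (2 * (n + 1)) * θ ^ n)) :
    volume A ≤ ∑ m, ENNReal.ofReal (θ * (a m + δ)) * faceMeasure m A := by
  have hw : ∀ i, 0 < a i + δ := fun i => by linarith [ha i]
  refine volume_le_sum_faceMeasure hw hA hAbox
    (habs.mono fun w hw => ⟨fun i => by rw [hw]; linarith, hw ▸ le_rfl⟩) fun x hx => ?_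
  obtain ⟨m, hm⟩ := exists_faceMeasure_ge ha hδ hAbox habs hx
  have hlt := hm.trans_lt
    ((Finset.single_le_sum (fun i _ => bot_le) (Finset.mem_univ m)).trans_lt h)
  rw [ENNReal.ofReal_lt_ofReal_iff'] at hlt
  exact (lt_of_pow_lt_pow_left₀ n hθ (lt_of_mul_lt_mul_left hlt.1 (by positivity))).le

variable {g : (Fin (n + 1) → ℝ) → ℝ} {a : Fin (n + 1) → ℝ} {δ : ℝ}

lemma volume_sublevel_le (hg : Continuous g) (ha : ∀ i, 0 < a i) (hδ : 0 < δ)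
    (habs : ∀ t, AbsorbsRays {x ∈ box 0 1 | g x < t} (Icc a fun i => a i + δ)) {t θ : ℝ}
    (hθ : 0 ≤ θ) (h : upperFaceArea g t < δ ^ n / (2 * (n + 1)) * θ ^ n) :
    (volume {x ∈ box 0 1 | g x < t}).toReal ≤ (‖a‖ + δ) * θ * upperFaceArea g t := by
  have hsum : ∑ m, faceMeasure m {x ∈ box 0 1 | g x < t} = ENNReal.ofReal (upperFaceArea g t) := by
    rw [upperFaceArea, ENNReal.ofReal_sum_of_nonneg fun _ _ => ENNReal.toReal_nonneg]
    exact Finset.sum_congr rfl fun m _ => (ENNReal.ofReal_toReal (faceMeasure_ne_top _ _)).symm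
  have hvol := volume_le_of_sum_faceMeasure_lt ha hδ (measurableSet_sublevel hg t) (sep_subset _ _)
    (habs t) hθ (hsum ▸ (ENNReal.ofReal_lt_ofReal_iff_of_nonneg
      (Finset.sum_nonneg fun _ _ => ENNReal.toReal_nonneg)).2 h)
  refine (ENNReal.toReal_mono (by simp [ENNReal.mul_eq_top, faceMeasure_ne_top]) hvol).trans ?_
  rw [ENNReal.toReal_sum fun m _ => by simp [ENNReal.mul_eq_top, faceMeasure_ne_top],
    upperFaceArea, Finset.mul_sum]
  refine Finset.sum_le_sum fun m _ => ?_
  rw [ENNReal.toReal_mul, ENNReal.toReal_ofReal (mul_nonneg hθ (by linarith [ha m]))]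
  have ham : a m ≤ ‖a‖ := (le_abs_self _).trans (norm_le_pi_norm a m)
  calc θ * (a m + δ) * (faceMeasure m {x ∈ box 0 1 | g x < t}).toReal
      ≤ θ * (‖a‖ + δ) * (faceMeasure m {x ∈ box 0 1 | g x < t}).toReal := by gcongr
    _ = _ := by ring

lemma pow_le_upperFaceArea {L : NNReal} (hg : LipschitzWith L g) {x₀ : Fin (n + 1) → ℝ}
    (hx₀ : x₀ ∈ box 0 1) (hgx₀ : g x₀ = 0) (ha : ∀ i, 0 < a i) (hδ : 0 < δ)
    (habs : ∀ t, AbsorbsRays {x ∈ box 0 1 | g x < t} (Icc a fun i => a i + δ))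
    {s : ℝ} (hs : s ∈ Ioc 0 ((L : ℝ) + 1)) :
    δ ^ n / (2 * (n + 1)) / ((L + 1) * (‖a‖ + δ)) ^ n * s ^ n ≤ upperFaceArea g s := by
  set ρ := s / (L + 1)
  have hρ : ρ ∈ Ioc 0 1 := ⟨by have := hs.1; positivity, (div_le_one (by positivity)).2 hs.2⟩
  -- `(1 - ρ) • x₀` lies in `{g < s}` at distance at least `ρ` from the upper faces.
  set x := (1 - ρ) • x₀
  have hx : x ∈ box 0 1 := ⟨fun i => mul_nonneg (by linarith [hρ.2]) (hx₀.1 i),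
    fun i => by simp only [x, Pi.smul_apply, smul_eq_mul]; nlinarith [hx₀.1 i, hx₀.2 i, hρ.1]⟩
  have hgx : g x < s := by
    have hdist : dist x x₀ ≤ ρ := by
      rw [dist_eq_norm, show x - x₀ = (-ρ) • x₀ by simp only [x]; module, norm_smul,
        Real.norm_eq_abs, abs_neg, abs_of_pos hρ.1]
      exact mul_le_of_le_one_right hρ.1.le ((pi_norm_le_iff_of_nonneg zero_le_one).2
        fun i => by rw [Real.norm_eq_abs, abs_of_nonneg (hx₀.1 i)]; exact hx₀.2 i)
    have := (le_abs_self _).trans ((Real.dist_eq _ _).symm.le.trans (hg.dist_le_mul x x₀))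
    have hLρ : (L : ℝ) * ρ < s := by
      rw [show (L : ℝ) * ρ = s * (L / (L + 1)) by simp only [ρ]; ring]
      exact mul_lt_of_lt_one_right hs.1 ((div_lt_one (by positivity)).2 (by linarith))
    nlinarith [mul_le_mul_of_nonneg_left hdist L.coe_nonneg]
  have hexit : s / ((L + 1) * (‖a‖ + δ)) ≤ exitTime (fun i => a i + δ) x := by
    refine le_exitTime fun i => ?_
    rw [← div_div]
    refine div_le_div₀ (by linarith [hx.2 i]) ?_ (by linarith [ha i])
      (by linarith [(le_abs_self _).trans (norm_le_pi_norm a i)])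
    simp only [x, Pi.smul_apply, smul_eq_mul]
    nlinarith [mul_le_mul_of_nonneg_left (hx₀.2 i) (sub_nonneg.2 hρ.2)]
  obtain ⟨m, hm⟩ := exists_faceMeasure_ge ha hδ (sep_subset _ _) (habs s) ⟨hx, hgx⟩
  rw [← ENNReal.ofReal_toReal (faceMeasure_ne_top _ _),
    ENNReal.ofReal_le_ofReal_iff ENNReal.toReal_nonneg] at hm
  refine le_trans ?_ (hm.trans (Finset.single_le_sum (f := fun m =>
    (faceMeasure m {x ∈ box 0 1 | g x < s}).toReal) (fun _ _ => ENNReal.toReal_nonneg)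
    (Finset.mem_univ m)))
  rw [div_mul_eq_mul_div, mul_div_assoc, ← div_pow]
  gcongr
  have := hs.1
  positivity

lemma false_of_absorbing_sublevels {L : NNReal} (hg : LipschitzWith L g)
    {x₀ : Fin (n + 1) → ℝ} (hx₀ : x₀ ∈ box 0 1) (hgx₀ : g x₀ = 0) (ha : ∀ i, 0 < a i)
    (hδ : 0 < δ) (habs : ∀ t, AbsorbsRays {x ∈ box 0 1 | g x < t} (Icc a fun i => a i + δ))
    {W : ℝ → ℝ} (hW : Tendsto W (𝓝[>] 0) (𝓝 0))
    (hWle : ∀ t, W t ≤ (volume {x ∈ box 0 1 | g x < t}).toReal)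
    {K : ℝ} (hK : 0 ≤ K) (hSW : ∀ t > 0, upperFaceArea g (t / 2) ≤ K * W t) : False :=
  false_of_faceArea_bounds (a := δ ^ n / (2 * (n + 1)) / ((L + 1) * (‖a‖ + δ)) ^ n)
    (b := δ ^ n / (2 * (n + 1))) (t₁ := L + 1) (by positivity) (by positivity) hK (by positivity)
    (fun s hs => pow_le_upperFaceArea hg hx₀ hgx₀ ha hδ habs hs) hW hSW
    fun t _ θ hθ h => (hWle t).trans (volume_sublevel_le hg.continuous ha hδ habs hθ h)

end Sublevel

theorem pooling_bundles_general
    (f : (Fin N → ℝ) → ℝ) (hf : DensityHyp 0 1 f)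
    (Q : Set (Fin N → ℝ)) (hQ : QHyp Q)
    (p : (Fin N → ℝ) → ℝ) (hopt : Optimal 0 1 f Q p)
    (q : Fin N → ℝ) (hq : q ∈ frontier Q)
    (v : Fin N → ℝ) (hv1 : ‖v‖ = 1) (hvpos : ∀ n, 0 ≤ v n)
    (hvint : v ∈ interior (NC Q q)) :
    muF f (demandSet (box 0 1) Q p q) ≠ 0 := by
  intro hD
  obtain ⟨n, rfl⟩ := Nat.exists_eq_add_one.2 (pos_of_norm_eq_one hv1)
  obtain ⟨hf0, -, hfc, -, hfb, M, hφM⟩ := hf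
  obtain ⟨-, hQc, hQpos, hQint, -⟩ := hQ
  obtain ⟨R, hR⟩ := exists_sum_abs_le hQc
  have hb := hopt.1.1
  have hqQ : q ∈ Q := hQc.isClosed.frontier_subset hq
  obtain ⟨δ, hδ, hcone⟩ := exists_Icc_subset_of_mem_interior hvint
  have ha : ∀ i, 0 < v i + δ := fun i => by linarith [hvpos i]
  have hq0 : q ≠ 0 :=
    ne_zero_of_pos_mem_NC hQpos hQint ha (hcone ⟨le_rfl, fun i => by simp [hδ.le]⟩)
  obtain ⟨c₀, hc₀, hc₀f⟩ := exists_pos_le_on_upper_faces hfc hfb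
  obtain ⟨L, hL⟩ := lipschitzWith_gap (X := box 0 1) (q := q) hR hb ⟨q, hqQ⟩
  obtain ⟨x₀, hx₀, hx₀q⟩ := exists_envelope_eq hR hb ⟨q, hqQ⟩ isCompact_box box_nonempty q
  have hgap0 : ∀ x ∈ box 0 1, 0 ≤ gap (box 0 1) Q p q x := fun x hx => gap_nonneg hR hb hqQ hx
  refine false_of_absorbing_sublevels hL hx₀ (by simp [gap, hx₀q]) ha hδ
    (absorbsRays_sublevel_gap hR hb hqQ hcone)
    (tendsto_volume_sublevel_pos hfc hL.continuous
      (measure_mono_null (setOf_gap_nonpos_subset_demandSet hR hb) hD))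
    (fun t => ENNReal.toReal_mono (measure_ne_top_of_subset (sep_subset _ _) (by simp [volume_box]))
      (measure_mono fun x hx => ⟨hx.1, hx.2.1⟩))
    (div_nonneg (mul_nonneg zero_le_two (nonneg_of_abs_phi_le hφM)) hc₀.le)
    fun t ht => upperFaceArea_half_le hf0 hfc hφM hc₀ hc₀f hL.continuous hgap0 ht
      (faceGain_le_interiorLoss hfc hφM hR hopt hqQ hq0 ht.le)

/-- Theorem 3, `X = [0,1]^N`: at an optimal feasible price schedule, if
`q ∈ ∂𝒬` and some unit vector `v` of the nonnegative orthant lies in the interior of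
the outward normal cone `NC(q)`, then `q` is pooling: `D(q)` has positive measure
under `f(x)dx`. -/
theorem pooling_bundles
    (hN : 0 < N)
    (f : (Fin N → ℝ) → ℝ) (hf : DensityHyp 0 1 f)
    (Q : Set (Fin N → ℝ)) (hQ : QHyp Q)
    (p : (Fin N → ℝ) → ℝ) (hopt : Optimal 0 1 f Q p)
    (q : Fin N → ℝ) (hq : q ∈ frontier Q)
    (v : Fin N → ℝ) (hv1 : ‖v‖ = 1) (hvpos : ∀ n, 0 ≤ v n)
    (hvint : v ∈ interior (NC Q q)) :
    muF f (demandSet (box 0 1) Q p q) ≠ 0 :=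
  pooling_bundles_general f hf Q hQ p hopt q hq v hv1 hvpos hvint

end Stmt13
end
end

section
/- For each x ∈ [0,1] there is a unique ζ(x) ∈ (0,1) satisfying ζ(x)·g(ζ(x)) / (1 − G(ζ(x))) = x·(θ − x) + 2. The function ζ : [0,1] → (0,1) defined this way is strictly concave on [0,1], strictly increasing on [0, θ/2], and strictly decreasing on [θ/2, 1] (so ζ attains its maximum over [0,1] at θ/2); in particular, when θ = 0, ζ is nonincreasing and concave on [0,1]. -/
/-!
On `(0, 1)` the left-hand side of the defining equation is `φ z = z e(z) / R(z)` with
`e(z) = exp (-(z - θ)² / 2)` and `R(z) = ∫_z^1 e`, the constant `C` cancelling. The function `φ`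
vanishes at `0`, exceeds `3` near `1`, and is strictly increasing and convex on `(0, 1)`: the sign
of `φ''` is that of a polynomial in `z, θ, R, e`, which is nonnegative using
`e ≥ 1 - (z - θ)² / 2` when `z ≤ θ` and `R ≤ (1 - z) e` when `θ ≤ z`. So `ζ = φ⁻¹ ∘ q` with
`q x = x (θ - x) + 2 ∈ [1, 3]`; as `φ⁻¹` is increasing and concave, `ζ` inherits the strict
concavity of `q` and its monotonicity on either side of its maximum at `θ / 2`.
-/

open MeasureTheory Set

noncomputable section

namespace Stmt19

section Comparison

variable {α β γ : Type*} [LinearOrder β] [Preorder γ] {s : Set β} {t : Set α}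
  {φ : β → γ} {ζ : α → β} {q : α → γ}

theorem lt_iff_lt_of_comp_eq (hφ : StrictMonoOn φ s) (hζ : MapsTo ζ t s)
    (h : ∀ x ∈ t, φ (ζ x) = q x) {x y : α} (hx : x ∈ t) (hy : y ∈ t) :
    ζ x < ζ y ↔ q x < q y := by
  rw [← h x hx, ← h y hy]
  exact (hφ.lt_iff_lt (hζ hx) (hζ hy)).symm

theorem le_iff_le_of_comp_eq (hφ : StrictMonoOn φ s) (hζ : MapsTo ζ t s)
    (h : ∀ x ∈ t, φ (ζ x) = q x) {x y : α} (hx : x ∈ t) (hy : y ∈ t) :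
    ζ x ≤ ζ y ↔ q x ≤ q y := by
  rw [← h x hx, ← h y hy]
  exact (hφ.le_iff_le (hζ hx) (hζ hy)).symm

theorem strictMonoOn_of_comp_eq [Preorder α] (hφ : StrictMonoOn φ s) (hζ : MapsTo ζ t s)
    (h : ∀ x ∈ t, φ (ζ x) = q x) {u : Set α} (hu : u ⊆ t) (hq : StrictMonoOn q u) :
    StrictMonoOn ζ u := fun _ hx _ hy hxy =>
  (lt_iff_lt_of_comp_eq hφ hζ h (hu hx) (hu hy)).2 (hq hx hy hxy)

theorem strictAntiOn_of_comp_eq [Preorder α] (hφ : StrictMonoOn φ s) (hζ : MapsTo ζ t s)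
    (h : ∀ x ∈ t, φ (ζ x) = q x) {u : Set α} (hu : u ⊆ t) (hq : StrictAntiOn q u) :
    StrictAntiOn ζ u := fun _ hx _ hy hxy =>
  (lt_iff_lt_of_comp_eq hφ hζ h (hu hy) (hu hx)).2 (hq hx hy hxy)

theorem isMaxOn_of_comp_eq (hφ : StrictMonoOn φ s) (hζ : MapsTo ζ t s)
    (h : ∀ x ∈ t, φ (ζ x) = q x) {a : α} (ha : a ∈ t) (hq : IsMaxOn q t a) :
    IsMaxOn ζ t a := fun _ hx =>
  (le_iff_le_of_comp_eq hφ hζ h hx ha).2 (hq hx)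

end Comparison

theorem strictConcaveOn_of_comp_eq {E : Type*} [AddCommGroup E] [Module ℝ E] {s : Set ℝ}
    {t : Set E} {φ : ℝ → ℝ} {ζ q : E → ℝ} (hφ : StrictMonoOn φ s) (hφc : ConvexOn ℝ s φ)
    (hζ : MapsTo ζ t s) (h : ∀ x ∈ t, φ (ζ x) = q x) (hq : StrictConcaveOn ℝ t q) :
    StrictConcaveOn ℝ t ζ := by
  refine ⟨hq.1, fun x hx y hy hxy a b ha hb hab => ?_⟩
  have hw : a • x + b • y ∈ t := hq.1 hx hy ha.le hb.le hab
  have hmid : a • ζ x + b • ζ y ∈ s := hφc.1 (hζ hx) (hζ hy) ha.le hb.le hab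
  refine (hφ.lt_iff_lt hmid (hζ hw)).1 ?_
  calc φ (a • ζ x + b • ζ y) ≤ a • φ (ζ x) + b • φ (ζ y) :=
        hφc.2 (hζ hx) (hζ hy) ha.le hb.le hab
    _ = a • q x + b • q y := by rw [h x hx, h y hy]
    _ < q (a • x + b • y) := hq.2 hx hy hxy ha hb hab
    _ = φ (ζ (a • x + b • y)) := (h _ hw).symm

theorem strictConcaveOn_mul_sub_add (θ c : ℝ) :
    StrictConcaveOn ℝ univ fun x : ℝ => x * (θ - x) + c := by
  refine ⟨convex_univ, fun x _ y _ hxy a b ha hb hab => ?_⟩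
  obtain rfl : b = 1 - a := by linarith
  have : 0 < a * (1 - a) * (x - y) ^ 2 := by
    have := sub_ne_zero.2 hxy
    positivity
  simp only [smul_eq_mul]
  nlinarith

/-- With `R` the tail mass and `e` the density at `z`, `hazardRatio` has derivatives
`e * firstNumer / R ^ 2` and `e * secondNumer / R ^ 3`. -/
def firstNumer (θ z R e : ℝ) : ℝ := (1 + z * (θ - z)) * R + z * e

def secondNumer (θ z R e : ℝ) : ℝ :=
  firstNumer θ z R e * ((θ - z) * R + 2 * e) + (θ - 2 * z) * R ^ 2

section Numerators

variable {θ z R e : ℝ}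

theorem firstNumer_pos (hθ : 0 ≤ θ) (hz : z ∈ Ioo (0 : ℝ) 1) (hR : 0 < R) (he : 0 < e) :
    0 < firstNumer θ z R e := by
  obtain ⟨hz0, hz1⟩ := hz
  have : 0 < 1 + z * (θ - z) := by nlinarith
  unfold firstNumer; positivity

theorem secondNumer_nonneg_of_le (hz : 0 < z) (hzθ : z ≤ θ) (hθ : θ ≤ 2) (hR : 0 < R)
    (hR1 : R ≤ 1) (he : 0 < e) (he' : 1 - (θ - z) ^ 2 / 2 ≤ e) :
    0 ≤ secondNumer θ z R e := by
  have hkey : (1 - (θ - z) ^ 2 / 2) * R ≤ e := by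
    rcases le_or_gt 0 (1 - (θ - z) ^ 2 / 2) with h | h <;> nlinarith
  have e1 : 0 ≤ z * (θ - z) ^ 2 * R ^ 2 := by positivity
  have e2 : 0 ≤ z * ((θ - z) * (e * R)) :=
    mul_nonneg hz.le (mul_nonneg (by linarith) (by positivity))
  have e3 : 0 ≤ R * (2 * e - (2 - (θ - z) ^ 2) * R) := by nlinarith
  have e4 : 0 ≤ (2 + 2 * (θ - z) - (θ - z) ^ 2 - z) * R ^ 2 :=
    mul_nonneg (by nlinarith [sq_nonneg (θ - z - 1)]) (sq_nonneg _)
  unfold secondNumer firstNumer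
  nlinarith [mul_nonneg hz.le (sq_nonneg e)]

theorem secondNumer_nonneg_of_ge (hθ : 0 ≤ θ) (hz : z ∈ Ioo (0 : ℝ) 1)
    (hR : 0 < R) (he : 0 < e) (hRe : R ≤ (1 - z) * e) :
    0 ≤ secondNumer θ z R e := by
  obtain ⟨hz0, hz1⟩ := hz
  have hQ : 0 ≤ 2 * e * R + 2 * z * e ^ 2 - 3 * z * R ^ 2 - 3 * z ^ 2 * e * R := by
    have hM : 0 < (1 - z) * e := mul_pos (by linarith) he
    have ha : 0 ≤ 3 * z * ((1 - z) * e) * R * ((1 - z) * e - R) :=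
      mul_nonneg (by positivity) (by linarith)
    have hb : 0 ≤ ((1 - z) * e - R) * (2 * z * e ^ 2) := mul_nonneg (by linarith) (by positivity)
    have hc : 0 ≤ R * e ^ 2 * (2 - 3 * z + 3 * z ^ 2) :=
      mul_nonneg (by positivity) (by nlinarith [sq_nonneg (2 * z - 1)])
    nlinarith
  have e1 : 0 ≤ z * (θ - z) ^ 2 * R ^ 2 := by positivity
  have e2 : 0 ≤ θ * (2 * R ^ 2 + 3 * z * e * R) := by positivity
  unfold secondNumer firstNumer
  nlinarith

end Numerators

def gaussBump (θ z : ℝ) : ℝ := Real.exp (-(z - θ) ^ 2 / 2)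

def upperMass (θ z : ℝ) : ℝ := ∫ t in z..1, gaussBump θ t

/-- `z g(z) / (1 - G(z))` with the normalising constant of `g` cancelled. -/
def hazardRatio (θ z : ℝ) : ℝ := z * gaussBump θ z / upperMass θ z

section Gaussian

variable (θ : ℝ)

theorem gaussBump_pos (z : ℝ) : 0 < gaussBump θ z := Real.exp_pos _

theorem continuous_gaussBump : Continuous (gaussBump θ) := by
  unfold gaussBump; fun_prop

theorem one_sub_sq_div_two_le_gaussBump (z : ℝ) : 1 - (θ - z) ^ 2 / 2 ≤ gaussBump θ z := by
  have := Real.add_one_le_exp (-(z - θ) ^ 2 / 2)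
  unfold gaussBump; nlinarith

theorem gaussBump_le_of_le {z t : ℝ} (hθz : θ ≤ z) (hzt : z ≤ t) : gaussBump θ t ≤ gaussBump θ z :=
  Real.exp_le_exp.2 (by nlinarith)

theorem hasDerivAt_gaussBump (z : ℝ) : HasDerivAt (gaussBump θ) ((θ - z) * gaussBump θ z) z := by
  have h : HasDerivAt (fun z : ℝ => -(z - θ) ^ 2 / 2) (θ - z) z := by
    have h1 : HasDerivAt (fun z : ℝ => z - θ) 1 z := (hasDerivAt_id z).sub_const θ
    exact ((h1.pow 2).neg.div_const 2).congr_deriv (by ring)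
  exact h.exp.congr_deriv (mul_comm _ _)

theorem upperMass_pos {z : ℝ} (hz : z < 1) : 0 < upperMass θ z :=
  intervalIntegral.intervalIntegral_pos_of_pos_on ((continuous_gaussBump θ).intervalIntegrable _ _)
    (fun t _ => gaussBump_pos θ t) hz

theorem upperMass_le_sub {z : ℝ} (hz : z ≤ 1) : upperMass θ z ≤ 1 - z := by
  calc upperMass θ z ≤ ∫ _ in z..1, (1 : ℝ) :=
        intervalIntegral.integral_mono_on hz ((continuous_gaussBump θ).intervalIntegrable _ _)
          intervalIntegrable_const fun t _ => Real.exp_le_one_iff.2 (by nlinarith)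
    _ = 1 - z := by simp

theorem upperMass_le_mul_gaussBump {z : ℝ} (hz : z ≤ 1) (hθz : θ ≤ z) :
    upperMass θ z ≤ (1 - z) * gaussBump θ z := by
  calc upperMass θ z ≤ ∫ _ in z..1, gaussBump θ z :=
        intervalIntegral.integral_mono_on hz ((continuous_gaussBump θ).intervalIntegrable _ _)
          intervalIntegrable_const fun t ht => gaussBump_le_of_le θ hθz ht.1
    _ = (1 - z) * gaussBump θ z := by simp

theorem hasDerivAt_upperMass (z : ℝ) : HasDerivAt (upperMass θ) (-gaussBump θ z) z :=
  intervalIntegral.integral_hasDerivAt_left ((continuous_gaussBump θ).intervalIntegrable _ _)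
    ((continuous_gaussBump θ).stronglyMeasurableAtFilter _ _) (continuous_gaussBump θ).continuousAt

theorem continuous_upperMass : Continuous (upperMass θ) :=
  continuous_iff_continuousAt.2 fun z => (hasDerivAt_upperMass θ z).continuousAt

theorem hasDerivAt_mul_gaussBump (z : ℝ) :
    HasDerivAt (fun z => z * gaussBump θ z) (gaussBump θ z * (1 + z * (θ - z))) z :=
  ((hasDerivAt_id z).mul (hasDerivAt_gaussBump θ z)).congr_deriv (by simp only [id]; ring)

theorem hasDerivAt_firstNumer (z : ℝ) :
    HasDerivAt (fun z => firstNumer θ z (upperMass θ z) (gaussBump θ z))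
      ((θ - 2 * z) * upperMass θ z) z := by
  have hpoly : HasDerivAt (fun z : ℝ => 1 + z * (θ - z)) (θ - 2 * z) z :=
    (((hasDerivAt_id z).mul ((hasDerivAt_id z).const_sub θ)).const_add 1).congr_deriv
      (by simp only [id]; ring)
  exact ((hpoly.mul (hasDerivAt_upperMass θ z)).add (hasDerivAt_mul_gaussBump θ z)).congr_deriv
    (by ring)

end Gaussian

def hazardRatioDeriv (θ z : ℝ) : ℝ :=
  gaussBump θ z * firstNumer θ z (upperMass θ z) (gaussBump θ z) / upperMass θ z ^ 2

def hazardRatioDeriv2 (θ z : ℝ) : ℝ :=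
  gaussBump θ z * secondNumer θ z (upperMass θ z) (gaussBump θ z) / upperMass θ z ^ 3

section HazardRatio

variable {θ : ℝ}

theorem hasDerivAt_hazardRatio {z : ℝ} (hz : z < 1) :
    HasDerivAt (hazardRatio θ) (hazardRatioDeriv θ z) z := by
  have hR := (upperMass_pos θ hz).ne'
  refine ((hasDerivAt_mul_gaussBump θ z).div (hasDerivAt_upperMass θ z) hR).congr_deriv ?_
  rw [hazardRatioDeriv, firstNumer]
  field_simp
  ring

theorem hasDerivAt_hazardRatioDeriv {z : ℝ} (hz : z < 1) :
    HasDerivAt (hazardRatioDeriv θ) (hazardRatioDeriv2 θ z) z := by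
  have hR := (upperMass_pos θ hz).ne'
  have hsq : HasDerivAt (fun z => upperMass θ z ^ 2)
      (2 * upperMass θ z * -gaussBump θ z) z :=
    ((hasDerivAt_upperMass θ z).pow 2).congr_deriv (by ring)
  refine (((hasDerivAt_gaussBump θ z).mul (hasDerivAt_firstNumer θ z)).div hsq
    (pow_ne_zero 2 hR)).congr_deriv ?_
  rw [hazardRatioDeriv2, secondNumer, Pi.mul_apply]
  field_simp
  ring

theorem continuousOn_hazardRatio (θ : ℝ) : ContinuousOn (hazardRatio θ) (Ico 0 1) :=
  ((continuous_id.mul (continuous_gaussBump θ)).continuousOn.div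
    (continuous_upperMass θ).continuousOn) fun _ hz => (upperMass_pos θ hz.2).ne'

theorem hazardRatioDeriv_pos (hθ : 0 ≤ θ) {z : ℝ} (hz : z ∈ Ioo (0 : ℝ) 1) :
    0 < hazardRatioDeriv θ z := by
  have hR := upperMass_pos θ hz.2
  have he := gaussBump_pos θ z
  have := firstNumer_pos hθ hz hR he
  rw [hazardRatioDeriv]; positivity

theorem hazardRatioDeriv2_nonneg (hθ : θ ∈ Icc (0 : ℝ) 2) {z : ℝ} (hz : z ∈ Ioo (0 : ℝ) 1) :
    0 ≤ hazardRatioDeriv2 θ z := by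
  have hR := upperMass_pos θ hz.2
  have he := gaussBump_pos θ z
  have hN : 0 ≤ secondNumer θ z (upperMass θ z) (gaussBump θ z) := by
    rcases le_total z θ with hzθ | hθz
    · exact secondNumer_nonneg_of_le hz.1 hzθ hθ.2 hR
        ((upperMass_le_sub θ hz.2.le).trans (by linarith [hz.1])) he
        (one_sub_sq_div_two_le_gaussBump θ z)
    · exact secondNumer_nonneg_of_ge hθ.1 hz hR he (upperMass_le_mul_gaussBump θ hz.2.le hθz)
  rw [hazardRatioDeriv2]; positivity

theorem strictMonoOn_hazardRatio (hθ : 0 ≤ θ) : StrictMonoOn (hazardRatio θ) (Ico 0 1) := by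
  refine strictMonoOn_of_hasDerivWithinAt_pos (f' := hazardRatioDeriv θ) (convex_Ico 0 1)
    (continuousOn_hazardRatio θ) (fun z hz => ?_) fun z hz => ?_ <;> rw [interior_Ico] at hz
  · exact (hasDerivAt_hazardRatio hz.2).hasDerivWithinAt
  · exact hazardRatioDeriv_pos hθ hz

theorem convexOn_hazardRatio (hθ : θ ∈ Icc (0 : ℝ) 2) : ConvexOn ℝ (Ioo 0 1) (hazardRatio θ) := by
  refine convexOn_of_hasDerivWithinAt2_nonneg (f' := hazardRatioDeriv θ)
    (f'' := hazardRatioDeriv2 θ) (convex_Ioo 0 1)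
    ((continuousOn_hazardRatio θ).mono Ioo_subset_Ico_self) (fun z hz => ?_) (fun z hz => ?_)
    fun z hz => ?_ <;> simp only [interior_Ioo] at hz ⊢
  · exact (hasDerivAt_hazardRatio hz.2).hasDerivWithinAt
  · exact (hasDerivAt_hazardRatioDeriv hz.2).hasDerivWithinAt
  · exact hazardRatioDeriv2_nonneg hθ hz

theorem three_lt_hazardRatio (hθ : θ ∈ Icc (0 : ℝ) 2) : 3 < hazardRatio θ (99 / 100) := by
  have hR := upperMass_pos θ (z := 99 / 100) (by norm_num)
  have hR1 := upperMass_le_sub θ (z := 99 / 100) (by norm_num)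
  have he := one_sub_sq_div_two_le_gaussBump θ (99 / 100)
  rw [hazardRatio, lt_div_iff₀ hR]
  nlinarith [hθ.1, hθ.2]

theorem existsUnique_hazardRatio_eq (hθ : θ ∈ Icc (0 : ℝ) 2) {v : ℝ} (hv : v ∈ Ioc (0 : ℝ) 3) :
    ∃! z, z ∈ Ioo (0 : ℝ) 1 ∧ hazardRatio θ z = v := by
  have hmem : v ∈ Ioo (hazardRatio θ 0) (hazardRatio θ (99 / 100)) := by
    simpa [hazardRatio] using ⟨hv.1, hv.2.trans_lt (three_lt_hazardRatio hθ)⟩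
  obtain ⟨z, hz, rfl⟩ := intermediate_value_Ioo (by norm_num)
    ((continuousOn_hazardRatio θ).mono (Icc_subset_Ico_right (by norm_num))) hmem
  have hz1 : z ∈ Ioo (0 : ℝ) 1 := ⟨hz.1, hz.2.trans (by norm_num)⟩
  refine ⟨z, ⟨hz1, rfl⟩, fun y ⟨hy, hyz⟩ => ?_⟩
  exact (strictMonoOn_hazardRatio hθ.1).injOn (Ioo_subset_Ico_self hy)
    (Ioo_subset_Ico_self hz1) hyz

end HazardRatio

theorem ratio_eq_hazardRatio {θ C : ℝ} {g G : ℝ → ℝ}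
    (hC : C = (∫ s in Icc (0 : ℝ) 1, Real.exp (-(s - θ) ^ 2 / 2))⁻¹)
    (hg : ∀ x, g x = C * Real.exp (-(x - θ) ^ 2 / 2))
    (hG : ∀ x, G x = ∫ s in Icc (0 : ℝ) x, g s) {z : ℝ} (hz : 0 ≤ z) :
    z * g z / (1 - G z) = hazardRatio θ z := by
  have hIcc : ∀ x, 0 ≤ x →
      ∫ s in Icc (0 : ℝ) x, Real.exp (-(s - θ) ^ 2 / 2) = ∫ s in 0..x, gaussBump θ s :=
    fun x hx => by rw [intervalIntegral.integral_of_le hx, integral_Icc_eq_integral_Ioc]; rfl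
  have hC' : C * ∫ s in (0 : ℝ)..1, gaussBump θ s = 1 := by
    rw [hC, hIcc 1 zero_le_one]
    exact inv_mul_cancel₀ (upperMass_pos θ zero_lt_one).ne'
  have hGz : G z = C * ∫ s in (0 : ℝ)..z, gaussBump θ s := by
    rw [hG, ← hIcc z hz, ← integral_const_mul]
    simp only [hg]
  have hG' : 1 - G z = C * upperMass θ z := by
    have hint := fun a b => (continuous_gaussBump θ).intervalIntegrable (μ := volume) a b
    rw [hGz, ← hC', ← mul_sub, upperMass, intervalIntegral.integral_interval_sub_left
      (hint 0 1) (hint 0 z)]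
  rw [hG', hg, hazardRatio, mul_left_comm,
    mul_div_mul_left _ _ (left_ne_zero_of_mul_eq_one hC'), gaussBump]

/-- for the truncated normal density `g(x) = C·exp(−(x−θ)²/2)` on `[0,1]`
with c.d.f. `G` and `θ ∈ [0,2]`, each `x ∈ [0,1]` determines a unique `ζ(x) ∈ (0,1)`
with `ζ(x)·g(ζ(x))/(1 − G(ζ(x))) = x·(θ − x) + 2`; the resulting `ζ` is strictly
concave on `[0,1]`, strictly increasing on `[0,θ/2]`, strictly decreasing on `[θ/2,1]`
(hence maximized at `θ/2`), and when `θ = 0` it is nonincreasing and concave. -/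
theorem truncated_normal_zeta
    (θ : ℝ) (hθ : θ ∈ Icc (0 : ℝ) 2)
    (C : ℝ) (hC : C = (∫ s in Icc (0 : ℝ) 1, Real.exp (-(s - θ) ^ 2 / 2))⁻¹)
    (g : ℝ → ℝ) (hg : ∀ x, g x = C * Real.exp (-(x - θ) ^ 2 / 2))
    (G : ℝ → ℝ) (hG : ∀ x, G x = ∫ s in Icc (0 : ℝ) x, g s) :
    (∀ x ∈ Icc (0 : ℝ) 1,
      ∃! z, z ∈ Ioo (0 : ℝ) 1 ∧ z * g z / (1 - G z) = x * (θ - x) + 2) ∧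
    ∀ ζ : ℝ → ℝ,
      (∀ x ∈ Icc (0 : ℝ) 1,
        ζ x ∈ Ioo (0 : ℝ) 1 ∧ ζ x * g (ζ x) / (1 - G (ζ x)) = x * (θ - x) + 2) →
      StrictConcaveOn ℝ (Icc (0 : ℝ) 1) ζ ∧
      StrictMonoOn ζ (Icc (0 : ℝ) (θ / 2)) ∧
      StrictAntiOn ζ (Icc (θ / 2) 1) ∧
      IsMaxOn ζ (Icc (0 : ℝ) 1) (θ / 2) ∧
      (θ = 0 → AntitoneOn ζ (Icc (0 : ℝ) 1) ∧ ConcaveOn ℝ (Icc (0 : ℝ) 1) ζ) := by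
  have hratio : ∀ z ∈ Ioo (0 : ℝ) 1, z * g z / (1 - G z) = hazardRatio θ z :=
    fun z hz => ratio_eq_hazardRatio hC hg hG hz.1.le
  refine ⟨fun x hx => ?_, fun ζ hζ => ?_⟩
  · have hq : x * (θ - x) + 2 ∈ Ioc (0 : ℝ) 3 :=
      ⟨by nlinarith [hθ.1, hx.1, hx.2],
        by nlinarith [sq_nonneg (θ - 2 * x), mul_nonneg (sub_nonneg.2 hθ.2) hθ.1]⟩
    refine (existsUnique_congr fun z => and_congr_right fun hz => ?_).1
      (existsUnique_hazardRatio_eq hθ hq)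
    rw [hratio z hz]
  have hmaps : MapsTo ζ (Icc 0 1) (Ioo 0 1) := fun x hx => (hζ x hx).1
  have hcomp : ∀ x ∈ Icc (0 : ℝ) 1, hazardRatio θ (ζ x) = x * (θ - x) + 2 :=
    fun x hx => (hratio _ (hζ x hx).1).symm.trans (hζ x hx).2
  have hmono := (strictMonoOn_hazardRatio hθ.1).mono Ioo_subset_Ico_self
  have hhalf : θ / 2 ∈ Icc (0 : ℝ) 1 := ⟨by linarith [hθ.1], by linarith [hθ.2]⟩
  have hconc : StrictConcaveOn ℝ (Icc 0 1) ζ :=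
    strictConcaveOn_of_comp_eq hmono (convexOn_hazardRatio hθ) hmaps hcomp
      ((strictConcaveOn_mul_sub_add θ 2).subset (subset_univ _) (convex_Icc 0 1))
  have hanti : StrictAntiOn ζ (Icc (θ / 2) 1) :=
    strictAntiOn_of_comp_eq hmono hmaps hcomp (Icc_subset_Icc_left hhalf.1)
      fun x hx y hy hxy => by nlinarith [hx.1, hy.1]
  refine ⟨hconc, strictMonoOn_of_comp_eq hmono hmaps hcomp (Icc_subset_Icc_right hhalf.2)
      (fun x hx y hy hxy => by nlinarith [hx.2, hy.2]), hanti,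
    isMaxOn_of_comp_eq hmono hmaps hcomp hhalf
      (isMaxOn_iff.2 fun x _ => by nlinarith [sq_nonneg (x - θ / 2)]),
    fun hθ0 => ⟨?_, hconc.concaveOn⟩⟩
  simpa [hθ0] using hanti.antitoneOn

end Stmt19
end
end
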